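/- arXiv:1007.5435 — 9 statements merged into one kernel-verified Lean document; each statement's English description precedes it below -/
import Mathlib

section
/- If (ρ,s) is an order-source pair for the SRM {g_α} and (s,ρ) is a weak source-order pair for {g_α}, then (s,ρ) is a strong source-order pair for {g_α}, i.e. limsup_{α→0⁺} s(λ)|r_α(λ)|/ρ(α) > 0 for every λ>0. -/
open Filter Topology Set

/-- A spectral regularization method `{g_α}_{α ∈ (0,α₀)}`:
`|λ g_α(λ)| ≤ C` uniformly (H2) and `g_α(λ) → 1/λ` as `α → 0⁺` for each `λ > 0` (H3). -/
structure SRM where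
  α₀ : ℝ
  hα₀ : 0 < α₀
  g : ℝ → ℝ → ℝ
  C : ℝ
  hC : 0 < C
  bound : ∀ α ∈ Ioo (0:ℝ) α₀, ∀ l : ℝ, 0 ≤ l → |l * g α l| ≤ C
  tendsto_inv : ∀ l : ℝ, 0 < l → Tendsto (fun α => g α l) (𝓝[>] 0) (𝓝 (1 / l))

namespace SRM
/-- `r_α(λ) = 1 - λ g_α(λ)`. -/
def r (G : SRM) (α l : ℝ) : ℝ := 1 - l * G.g α l
end SRM

/-- The class `𝒪` of nondecreasing positive functions with `ρ(α) → 0` as `α → 0⁺`. -/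
def memO (ρ : ℝ → ℝ) : Prop :=
  (∀ a, 0 < a → 0 < ρ a) ∧ MonotoneOn ρ (Ioi (0:ℝ)) ∧ Tendsto ρ (𝓝[>] 0) (𝓝 0)

/-- The class `𝒮` of continuous `s : [0,∞) → [0,∞)` with `s(0)=0`, `s(λ)>0` for `λ>0`. -/
def memS (s : ℝ → ℝ) : Prop :=
  ContinuousOn s (Ici (0:ℝ)) ∧ s 0 = 0 ∧ (∀ l, 0 ≤ l → 0 ≤ s l) ∧ (∀ l, 0 < l → 0 < s l)

/-- `(s,ρ)` is a weak source-order pair: `s(λ)|r_α(λ)|/ρ(α) = O(1)` as `α → 0⁺`, each `λ>0`. -/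
def weakPair (G : SRM) (s ρ : ℝ → ℝ) : Prop :=
  ∀ l, 0 < l → ∃ k : ℝ, ∀ᶠ α in 𝓝[>] (0:ℝ), s l * |G.r α l| / ρ α ≤ k

/-- `(s,ρ)` is a strong source-order pair: weak, and the `O(1)` is never `o(1)`. -/
def strongPair (G : SRM) (s ρ : ℝ → ℝ) : Prop :=
  weakPair G s ρ ∧
    ∀ l, 0 < l → 0 < Filter.limsup (fun α => s l * |G.r α l| / ρ α) (𝓝[>] (0:ℝ))

/-- `(ρ,s)` is an order-source pair: `s(λ)|r_α(λ)|/ρ(α) ≥ γ` for all `λ ≥ h(α)`. -/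
def orderSourcePair (G : SRM) (ρ s : ℝ → ℝ) : Prop :=
  ∃ γ > (0:ℝ), ∃ h : ℝ → ℝ, (∀ α ∈ Ioo (0:ℝ) G.α₀, 0 < h α) ∧
    Tendsto h (𝓝[>] 0) (𝓝 0) ∧
    ∀ α ∈ Ioo (0:ℝ) G.α₀, ∀ l, h α ≤ l → γ ≤ s l * |G.r α l| / ρ α

/-- `ρ` is weak (generalized) qualification of `{g_α}`. -/
def weakQual (G : SRM) (ρ : ℝ → ℝ) : Prop := ∃ s, memS s ∧ weakPair G s ρ

/-- `ρ` is strong qualification of `{g_α}`. -/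
def strongQual (G : SRM) (ρ : ℝ → ℝ) : Prop := ∃ s, memS s ∧ strongPair G s ρ

/-- `ρ` is optimal qualification of `{g_α}`. -/
def optQual (G : SRM) (ρ : ℝ → ℝ) : Prop :=
  ∃ s, memS s ∧ strongPair G s ρ ∧ orderSourcePair G ρ s

/-- `s_ρ(λ) = liminf_{α→0⁺} ρ(α)/|r_α(λ)|`, valued in `[0,∞]`. -/
noncomputable def SRM.sLow (G : SRM) (ρ : ℝ → ℝ) (l : ℝ) : ENNReal :=
  Filter.liminf (fun α => ENNReal.ofReal (ρ α) / ENNReal.ofReal |G.r α l|) (𝓝[>] (0:ℝ))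

theorem orderSourcePair.eventually_le {G : SRM} {ρ s : ℝ → ℝ} (hos : orderSourcePair G ρ s) :
    ∃ γ > (0:ℝ), ∀ l, 0 < l → ∀ᶠ α in 𝓝[>] (0:ℝ), γ ≤ s l * |G.r α l| / ρ α := by
  obtain ⟨γ, hγ, h, -, hh0, hbound⟩ := hos
  refine ⟨γ, hγ, fun l hl => ?_⟩
  have hα : ∀ᶠ α in 𝓝[>] (0:ℝ), α ∈ Ioo (0:ℝ) G.α₀ :=
    Ioo_mem_nhdsGT_of_mem ⟨le_rfl, G.hα₀⟩
  have hhl : ∀ᶠ α in 𝓝[>] (0:ℝ), h α < l := hh0.eventually (gt_mem_nhds hl)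
  filter_upwards [hα, hhl] with α hα hαl
  exact hbound α hα l hαl.le

theorem strongPair_of_orderSource_weak_general (G : SRM) (s ρ : ℝ → ℝ)
    (hos : orderSourcePair G ρ s) (hw : weakPair G s ρ) :
    strongPair G s ρ := by
  obtain ⟨γ, hγ, hlower⟩ := hos.eventually_le
  refine ⟨hw, fun l hl => hγ.trans_le ?_⟩
  -- Without the upper bound from `hw` the real `limsup` would be the junk value `0`.
  obtain ⟨k, hk⟩ := hw l hl
  exact le_limsup_of_frequently_le (hlower l hl).frequently ⟨k, hk⟩

/-- If `(ρ,s)` is an order-source pair and `(s,ρ)` is a weak source-order pair,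
then `(s,ρ)` is a strong source-order pair. -/
theorem strongPair_of_orderSource_weak (G : SRM) (s ρ : ℝ → ℝ)
    (hs : memS s) (hρ : memO ρ)
    (hos : orderSourcePair G ρ s) (hw : weakPair G s ρ) :
    strongPair G s ρ :=
  strongPair_of_orderSource_weak_general G s ρ hos hw
end

section
/- Let {g_α} be a SRM such that for each fixed λ>0, g_α(λ) is decreasing in α. Suppose there exist an increasing function h:(0,α₀)→ℝ⁺ with lim_{α→0⁺}h(α)=0, a function ρ* ∈ 𝒪, and ε>0 such that sup_{λ ≥ h(α)} |r_α(λ)| ≤ ρ*(α) for all α∈(0,ε). Then ρ* is weak qualification of {g_α}, i.e. there exists s∈𝒮 such that (s,ρ*) is a weak source-order pair for {g_α}. -/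
open Filter Topology Set

/-! Since `h(α) → 0`, each fixed `λ > 0` eventually satisfies `λ ≥ h(α)`, so the uniform bound gives
`|r_α(λ)| ≤ ρ*(α)` for all small `α`. Then `s(λ)|r_α(λ)|/ρ*(α) ≤ s(λ)` for any nonnegative `s`,
and `s(λ) = λ` will do. -/

theorem memS_id : memS id :=
  ⟨continuous_id.continuousOn, rfl, fun _ hl => hl, fun _ hl => hl⟩

theorem weakPair_of_eventually_abs_r_le (G : SRM) {s ρ : ℝ → ℝ} (hs : ∀ l, 0 < l → 0 ≤ s l)
    (hr : ∀ l, 0 < l → ∀ᶠ α in 𝓝[>] (0:ℝ), |G.r α l| ≤ ρ α) : weakPair G s ρ := by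
  intro l hl
  refine ⟨s l, ?_⟩
  filter_upwards [hr l hl] with α hα
  -- `ρ α = 0` is allowed: the quotient is then the junk value `0`.
  have hquot : |G.r α l| / ρ α ≤ 1 := div_le_one_of_le₀ hα ((abs_nonneg _).trans hα)
  calc s l * |G.r α l| / ρ α = s l * (|G.r α l| / ρ α) := mul_div_assoc _ _ _
    _ ≤ s l * 1 := mul_le_mul_of_nonneg_left hquot (hs l hl)
    _ = s l := mul_one _

theorem eventually_abs_r_le_of_sup_bound (G : SRM) {h ρ : ℝ → ℝ} (hlim : Tendsto h (𝓝[>] 0) (𝓝 0))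
    {ε : ℝ} (hε : 0 < ε) (hbound : ∀ α ∈ Ioo (0:ℝ) ε, ∀ l, h α ≤ l → |G.r α l| ≤ ρ α)
    {l : ℝ} (hl : 0 < l) : ∀ᶠ α in 𝓝[>] (0:ℝ), |G.r α l| ≤ ρ α := by
  filter_upwards [Ioo_mem_nhdsGT hε, hlim.eventually_lt_const hl] with α hα hhα
  exact hbound α hα l hhα.le

theorem weakQual_of_sup_bound_general (G : SRM)
    (h : ℝ → ℝ)
    (hlim : Tendsto h (𝓝[>] 0) (𝓝 0))
    (ρstar : ℝ → ℝ)
    (ε : ℝ) (hε : 0 < ε)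
    (hbound : ∀ α ∈ Ioo (0:ℝ) ε, ∀ l, h α ≤ l → |G.r α l| ≤ ρstar α) :
    weakQual G ρstar :=
  ⟨id, memS_id, weakPair_of_eventually_abs_r_le G (fun _ hl => hl.le)
    fun _ hl => eventually_abs_r_le_of_sup_bound G hlim hε hbound hl⟩

/-- Theorem 2.7 a): sufficient condition for weak qualification. -/
theorem weakQual_of_sup_bound (G : SRM)
    (hdec : ∀ l, 0 < l → AntitoneOn (fun α => G.g α l) (Ioo (0:ℝ) G.α₀))
    (h : ℝ → ℝ) (hpos : ∀ α ∈ Ioo (0:ℝ) G.α₀, 0 < h α)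
    (hmono : MonotoneOn h (Ioo (0:ℝ) G.α₀))
    (hlim : Tendsto h (𝓝[>] 0) (𝓝 0))
    (ρstar : ℝ → ℝ) (hρ : memO ρstar)
    (ε : ℝ) (hε : 0 < ε)
    (hbound : ∀ α ∈ Ioo (0:ℝ) ε, ∀ l, h α ≤ l → |G.r α l| ≤ ρstar α) :
    weakQual G ρstar :=
  weakQual_of_sup_bound_general G h hlim ρstar ε hε hbound
end

section
/- Let {g_α} be a SRM such that for every α∈(0,α₀), r_α(λ)=1-λg_α(λ) is positive and monotone decreasing in λ on (0,∞), and for every fixed λ>0, g_α(λ) is decreasing in α. Then there exist an increasing function h:(0,α₀)→ℝ⁺ with lim_{α→0⁺}h(α)=0 and ρ* ∈ 𝒪 such that sup_{λ≥h(α)}|r_α(λ)| ≤ ρ*(α) for all α∈(0,α₀); in particular {g_α} has weak qualification. -/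
open Filter Topology Set

/-!
Along `λₙ = 1/(n+1)` we have `r_α(λₙ) → 0` as `α → 0⁺`, and `r_α(λ)` increases with `α`
because `g_α(λ)` decreases; hence there are positive thresholds `bₙ → 0` with `r_α(λₙ) ≤ λₙ`
whenever `α ≤ bₙ`.
An index `m(α)`, decreasing in `α`, tending to `∞` as `α → 0⁺` and with `α ≤ b_{m(α)}` (unless
`m(α) = 0`), gives the increasing step function `h(α) = λ_{m(α)} → 0` with `r_α(h(α)) ≤ h(α)`, or
`h(α) = 1` where the uniform bound `r_α ≤ 1 + C` applies. As `r_α` is positive and decreasing in `λ`,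
`sup_{λ ≥ h(α)} |r_α(λ)| = r_α(h(α)) ≤ (1 + C) h(α) =: ρ*(α)`, and `s(λ) = λ` witnesses the weak
qualification of `ρ*`.
-/

namespace SRM

variable (G : SRM)

theorem tendsto_r {l : ℝ} (hl : 0 < l) : Tendsto (fun α => G.r α l) (𝓝[>] 0) (𝓝 0) := by
  have := tendsto_const_nhds (x := (1 : ℝ)).sub ((G.tendsto_inv l hl).const_mul l)
  rwa [mul_one_div_cancel hl.ne', sub_self] at this

theorem r_le_one_add_C {α : ℝ} (hα : α ∈ Ioo 0 G.α₀) {l : ℝ} (hl : 0 ≤ l) :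
    G.r α l ≤ 1 + G.C := by
  have := neg_abs_le (l * G.g α l)
  have := G.bound α hα l hl
  unfold r
  linarith

theorem monotoneOn_r {l : ℝ} (hl : 0 ≤ l) {s : Set ℝ} (hg : AntitoneOn (fun α => G.g α l) s) :
    MonotoneOn (fun α => G.r α l) s :=
  fun _ ha _ hb hab => sub_le_sub_left (mul_le_mul_of_nonneg_left (hg ha hb hab) hl) 1

end SRM

theorem memO.const_mul {ρ : ℝ → ℝ} (hρ : memO ρ) {c : ℝ} (hc : 0 < c) :
    memO (fun a => c * ρ a) := by
  obtain ⟨hpos, hmono, hlim⟩ := hρ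
  refine ⟨fun a ha => mul_pos hc (hpos a ha),
    fun a ha b hb hab => mul_le_mul_of_nonneg_left (hmono ha hb hab) hc.le, ?_⟩
  simpa using hlim.const_mul c

theorem weakQual_of_abs_r_le (G : SRM) {h ρ : ℝ → ℝ} (hρ : ∀ a, 0 < a → 0 < ρ a)
    (hh : Tendsto h (𝓝[>] 0) (𝓝 0))
    (hr : ∀ α ∈ Ioo (0:ℝ) G.α₀, ∀ l, h α ≤ l → |G.r α l| ≤ ρ α) :
    weakQual G ρ := by
  refine ⟨id, ⟨continuousOn_id, rfl, fun _ hl => hl, fun _ hl => hl⟩, fun l hl => ⟨l, ?_⟩⟩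
  filter_upwards [hh.eventually_le_const hl, Ioo_mem_nhdsGT G.hα₀] with α hαl hα
  rw [div_le_iff₀ (hρ α hα.1)]
  exact mul_le_mul_of_nonneg_left (hr α hα l hαl) hl.le

theorem exists_seq_tendsto_zero_forall_le {a : ℝ} (ha : 0 < a) {φ : ℕ → ℝ → ℝ} {ε : ℕ → ℝ}
    (hmono : ∀ n, MonotoneOn (φ n) (Ioo 0 a)) (hφ : ∀ n, ∀ᶠ α in 𝓝[>] 0, φ n α ≤ ε n) :
    ∃ b : ℕ → ℝ, (∀ n, 0 < b n) ∧ Tendsto b atTop (𝓝 0) ∧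
      ∀ n, ∀ α ∈ Ioo 0 a, α ≤ b n → φ n α ≤ ε n := by
  have hc (n : ℕ) : ∃ c ∈ Ioo 0 (min a (1 / (n + 1))), φ n c ≤ ε n :=
    (Filter.Eventually.and (Ioo_mem_nhdsGT (lt_min ha (by positivity))) (hφ n)).exists
  choose b hb hφb using hc
  refine ⟨b, fun n => (hb n).1, ?_, fun n α hα hαb =>
    (hmono n hα ⟨(hb n).1, (hb n).2.trans_le (min_le_left _ _)⟩ hαb).trans (hφb n)⟩
  exact tendsto_of_tendsto_of_tendsto_of_le_of_le tendsto_const_nhds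
    tendsto_one_div_add_atTop_nhds_zero_nat (fun n => (hb n).1.le)
    fun n => ((hb n).2.trans_le (min_le_right _ _)).le

theorem exists_antitoneOn_tendsto_atTop_le_seq {b : ℕ → ℝ} (hb : Tendsto b atTop (𝓝 0))
    (hbpos : ∀ n, 0 < b n) :
    ∃ m : ℝ → ℕ, AntitoneOn m (Ioi 0) ∧ Tendsto m (𝓝[>] 0) atTop ∧
      ∀ α, 0 < α → m α = 0 ∨ α ≤ b (m α) := by
  have hne : ∀ α : ℝ, 0 < α → {n | b (n + 1) < α}.Nonempty := fun α hα =>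
    ((tendsto_add_atTop_nat 1).eventually (hb.eventually_lt_const hα)).exists
  refine ⟨fun α => sInf {n | b (n + 1) < α}, ?_, ?_, ?_⟩
  · intro α hα α' _ hαα'
    exact Nat.sInf_le ((Nat.sInf_mem (hne α hα)).trans_le hαα')
  · refine tendsto_atTop.2 fun n => ?_
    have hsmall : ∀ᶠ α in 𝓝[>] (0:ℝ), ∀ k ∈ Finset.range n, α ≤ b (k + 1) :=
      (Finset.range n).eventually_all.2 fun k _ =>
        eventually_nhdsWithin_of_eventually_nhds (eventually_le_nhds (hbpos (k + 1)))
    filter_upwards [hsmall, self_mem_nhdsWithin] with α hα hα0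
    refine le_csInf (hne α hα0) fun k hk => ?_
    by_contra! hkn
    exact (hα k (Finset.mem_range.2 hkn)).not_gt hk
  · intro α _
    dsimp only
    rcases hm : sInf {n | b (n + 1) < α} with _ | k
    · exact Or.inl rfl
    · have hk : k < sInf {n | b (n + 1) < α} := hm ▸ k.lt_succ_self
      exact Or.inr (not_lt.1 (Nat.notMem_of_lt_sInf hk))

theorem memO_one_div_add_one {m : ℝ → ℕ} (hm_anti : AntitoneOn m (Ioi 0))
    (hm : Tendsto m (𝓝[>] 0) atTop) : memO (fun α => 1 / ((m α : ℝ) + 1)) :=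
  ⟨fun _ _ => by positivity,
    fun _ hα _ hα' hαα' => one_div_le_one_div_of_le (by positivity) (by
      exact_mod_cast Nat.add_le_add_right (hm_anti hα hα' hαα') 1),
    tendsto_one_div_add_atTop_nhds_zero_nat.comp hm⟩

/-- Theorem 2.7 b): if `r_α` is positive and decreasing in `λ` (and `g_α(λ)` decreasing
in `α`), then `h` and `ρ*` as in part a) always exist; in particular `{g_α}` has weak
qualification. -/
theorem exists_h_rhoStar (G : SRM)
    (hdec : ∀ l, 0 < l → AntitoneOn (fun α => G.g α l) (Ioo (0:ℝ) G.α₀))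
    (hrpos : ∀ α ∈ Ioo (0:ℝ) G.α₀, ∀ l, 0 < l → 0 < G.r α l)
    (hrdec : ∀ α ∈ Ioo (0:ℝ) G.α₀, AntitoneOn (fun l => G.r α l) (Ioi (0:ℝ))) :
    ∃ h ρstar : ℝ → ℝ,
      (∀ α ∈ Ioo (0:ℝ) G.α₀, 0 < h α) ∧ MonotoneOn h (Ioo (0:ℝ) G.α₀) ∧
      Tendsto h (𝓝[>] 0) (𝓝 0) ∧ memO ρstar ∧
      (∀ α ∈ Ioo (0:ℝ) G.α₀, ∀ l, h α ≤ l → |G.r α l| ≤ ρstar α) ∧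
      weakQual G ρstar := by
  have hpt (n : ℕ) : (0 : ℝ) < 1 / (n + 1) := by positivity
  obtain ⟨b, hbpos, hb, hbr⟩ := exists_seq_tendsto_zero_forall_le
    (φ := fun n α => G.r α (1 / (n + 1))) (ε := fun n => 1 / (n + 1))
    G.hα₀ (fun n => G.monotoneOn_r (hpt n).le (hdec _ (hpt n)))
    (fun n => (G.tendsto_r (hpt n)).eventually_le_const (hpt n))
  obtain ⟨m, hm_anti, hm, hm_le⟩ := exists_antitoneOn_tendsto_atTop_le_seq hb hbpos
  set h : ℝ → ℝ := fun α => 1 / ((m α : ℝ) + 1)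
  have hh_pos (α : ℝ) : 0 < h α := by positivity
  have hO : memO h := memO_one_div_add_one hm_anti hm
  have hr_h (α : ℝ) (hα : α ∈ Ioo 0 G.α₀) : G.r α (h α) ≤ (1 + G.C) * h α := by
    rcases hm_le α hα.1 with h0 | hαb
    · simpa [h, h0] using G.r_le_one_add_C hα zero_le_one
    · exact (hbr _ α hα hαb).trans
        (le_mul_of_one_le_left (hh_pos α).le (le_add_of_nonneg_right G.hC.le))
  have hr_le : ∀ α ∈ Ioo (0:ℝ) G.α₀, ∀ l, h α ≤ l → |G.r α l| ≤ (1 + G.C) * h α := by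
    intro α hα l hl
    have hl0 := (hh_pos α).trans_le hl
    rw [abs_of_pos (hrpos α hα l hl0)]
    exact (hrdec α hα (hh_pos α) hl0 hl).trans (hr_h α hα)
  have hρ := hO.const_mul (by linarith [G.hC] : 0 < 1 + G.C)
  exact ⟨h, _, fun α _ => hh_pos α, hO.2.1.mono Ioo_subset_Ioi_self, hO.2.2, hρ, hr_le,
    weakQual_of_abs_r_le G hρ.1 hO.2.2 hr_le⟩
end

section
/- If (s,ρ₁) and (s,ρ₂) are strong source-order pairs for the SRM {g_α} and the limit lim_{α→0⁺} ρ₁(α)/ρ₂(α) exists, then ρ₁ ≈ ρ₂, i.e. there exist ε>0 and 0<c₁<c₂<∞ with c₁ρ₁(α) ≤ ρ₂(α) ≤ c₂ρ₁(α) for all α∈(0,ε). -/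
open Filter Topology Set

/-! The limit `L` of `ρ₁/ρ₂` is nonnegative, and it cannot vanish: otherwise
`s(λ)|r_α(λ)|/ρ₂(α) = (s(λ)|r_α(λ)|/ρ₁(α)) · (ρ₁(α)/ρ₂(α))` would tend to `0` by the `O(1)` bound
for `ρ₁`, against the positive limsup for `ρ₂`. Once `L > 0`, the ratio eventually lies in
`(L/2, 2L)`, which gives the constants `(2L)⁻¹` and `2/L`. -/

section Comparison

variable {G : SRM} {s ρ₁ ρ₂ : ℝ → ℝ}

lemma weakPair.tendsto_zero_of_tendsto_div_zero (h₁ : weakPair G s ρ₁)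
    (hρ₁ : ∀ a, 0 < a → 0 < ρ₁ a) (hρ₂ : ∀ a, 0 < a → 0 < ρ₂ a) {l : ℝ} (hl : 0 < l)
    (hsl : 0 ≤ s l) (h : Tendsto (fun α => ρ₁ α / ρ₂ α) (𝓝[>] 0) (𝓝 0)) :
    Tendsto (fun α => s l * |G.r α l| / ρ₂ α) (𝓝[>] 0) (𝓝 0) := by
  obtain ⟨k, hk⟩ := h₁ l hl
  have hpos : ∀ᶠ α in 𝓝[>] (0:ℝ), 0 < ρ₁ α ∧ 0 < ρ₂ α :=
    eventually_nhdsWithin_of_forall fun α (hα : 0 < α) => ⟨hρ₁ α hα, hρ₂ α hα⟩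
  refine squeeze_zero' ?_ ?_ (by simpa using h.const_mul k)
  · filter_upwards [hpos] with α ⟨_, h2⟩
    exact div_nonneg (mul_nonneg hsl (abs_nonneg _)) h2.le
  · filter_upwards [hk, hpos] with α hkα ⟨h1, h2⟩
    calc s l * |G.r α l| / ρ₂ α = s l * |G.r α l| / ρ₁ α * (ρ₁ α / ρ₂ α) := by field_simp
      _ ≤ k * (ρ₁ α / ρ₂ α) := by gcongr

lemma pos_of_tendsto_div_of_weakPair_of_strongPair (h₁ : weakPair G s ρ₁)
    (h₂ : strongPair G s ρ₂) (hs : ∀ l, 0 ≤ l → 0 ≤ s l)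
    (hρ₁ : ∀ a, 0 < a → 0 < ρ₁ a) (hρ₂ : ∀ a, 0 < a → 0 < ρ₂ a) {L : ℝ}
    (hL : Tendsto (fun α => ρ₁ α / ρ₂ α) (𝓝[>] 0) (𝓝 L)) : 0 < L := by
  have hL_nonneg : 0 ≤ L := ge_of_tendsto hL <|
    eventually_nhdsWithin_of_forall fun α (hα : 0 < α) => (div_pos (hρ₁ α hα) (hρ₂ α hα)).le
  refine hL_nonneg.lt_of_ne fun hL_zero => ?_
  subst hL_zero
  have hdecay := h₁.tendsto_zero_of_tendsto_div_zero hρ₁ hρ₂ one_pos (hs 1 zero_le_one) hL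
  have hlimsup := h₂.2 1 one_pos
  rw [hdecay.limsup_eq] at hlimsup
  exact hlimsup.false

end Comparison

lemma eventually_le_mul_and_le_mul_of_tendsto_div {ι : Type*} {l : Filter ι} {f g : ι → ℝ}
    {L : ℝ} (hL : 0 < L) (hg : ∀ᶠ x in l, 0 < g x) (h : Tendsto (fun x => f x / g x) l (𝓝 L)) :
    ∀ᶠ x in l, (2 * L)⁻¹ * f x ≤ g x ∧ g x ≤ 2 / L * f x := by
  filter_upwards [h (Ioo_mem_nhds (half_lt_self hL) (by linarith : L < 2 * L)), hg]
    with x ⟨hlo, hhi⟩ hgx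
  rw [lt_div_iff₀ hgx] at hlo
  rw [div_lt_iff₀ hgx] at hhi
  constructor
  · rw [inv_mul_le_iff₀ (by positivity)]
    linarith
  · rw [div_mul_eq_mul_div, le_div_iff₀ hL]
    linarith

/-- Uniqueness of the order: if `(s,ρ₁)` and `(s,ρ₂)` are strong source-order pairs and
`lim_{α→0⁺} ρ₁(α)/ρ₂(α)` exists, then `ρ₁ ≈ ρ₂` at the origin. -/
theorem order_unique (G : SRM) (s ρ₁ ρ₂ : ℝ → ℝ)
    (hs : memS s) (hρ₁ : memO ρ₁) (hρ₂ : memO ρ₂)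
    (h₁ : strongPair G s ρ₁) (h₂ : strongPair G s ρ₂)
    (hlim : ∃ L : ℝ, Tendsto (fun α => ρ₁ α / ρ₂ α) (𝓝[>] 0) (𝓝 L)) :
    ∃ ε > (0:ℝ), ∃ c₁ c₂ : ℝ, 0 < c₁ ∧ c₁ < c₂ ∧
      ∀ α ∈ Ioo (0:ℝ) ε, c₁ * ρ₁ α ≤ ρ₂ α ∧ ρ₂ α ≤ c₂ * ρ₁ α := by
  obtain ⟨L, hL⟩ := hlim
  have hL_pos : 0 < L :=
    pos_of_tendsto_div_of_weakPair_of_strongPair h₁.1 h₂ hs.2.2.1 hρ₁.1 hρ₂.1 hL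
  have hρ₂_pos : ∀ᶠ α in 𝓝[>] (0:ℝ), 0 < ρ₂ α := eventually_nhdsWithin_of_forall hρ₂.1
  obtain ⟨ε, hε, hbounds⟩ := mem_nhdsGT_iff_exists_Ioo_subset.mp
    (eventually_le_mul_and_le_mul_of_tendsto_div hL_pos hρ₂_pos hL)
  refine ⟨ε, hε, (2 * L)⁻¹, 2 / L, by positivity, ?_, fun α hα => hbounds hα⟩
  rw [← one_div, div_lt_div_iff₀ (by positivity) hL_pos]
  linarith
end

section
/- The truncated singular value decomposition method, defined by g_α(λ)=1/λ for λ≥α and g_α(λ)=0 for 0≤λ<α, has no strong qualification: for every ρ∈𝒪 and every λ>0, s_ρ(λ) = liminf_{α→0⁺} ρ(α)/|r_α(λ)| = +∞, while every ρ∈𝒪 is weak qualification of the method. -/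
open Filter Topology Set

namespace SRM

variable {G : SRM} {l : ℝ}

theorem eventually_r_eq_zero_of_tsvd
    (hg : ∀ α ∈ Ioo (0:ℝ) G.α₀, ∀ l : ℝ, 0 ≤ l → G.g α l = if α ≤ l then 1 / l else 0)
    (hl : 0 < l) : ∀ᶠ α in 𝓝[>] (0:ℝ), G.r α l = 0 := by
  filter_upwards [Ioo_mem_nhdsGT (lt_min hl G.hα₀)] with α ⟨hα_pos, hα_lt⟩
  have hα : α ∈ Ioo (0:ℝ) G.α₀ := ⟨hα_pos, hα_lt.trans_le (min_le_right _ _)⟩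
  rw [r, hg α hα l hl.le, if_pos (hα_lt.trans_le (min_le_left _ _)).le, mul_one_div_cancel hl.ne',
    sub_self]

theorem sLow_eq_top_of_eventually_r_eq_zero {ρ : ℝ → ℝ} (hρ : ∀ a, 0 < a → 0 < ρ a)
    (hr : ∀ᶠ α in 𝓝[>] (0:ℝ), G.r α l = 0) : G.sLow ρ l = ⊤ := by
  have h_top : ∀ᶠ α in 𝓝[>] (0:ℝ), ENNReal.ofReal (ρ α) / ENNReal.ofReal |G.r α l| = ⊤ := by
    filter_upwards [hr, self_mem_nhdsWithin] with α hα (hα_pos : 0 < α)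
    rw [hα, abs_zero, ENNReal.ofReal_zero]
    exact ENNReal.div_zero (ENNReal.ofReal_pos.2 (hρ α hα_pos)).ne'
  rw [sLow, liminf_congr h_top, liminf_const]

theorem weakPair_of_eventually_r_eq_zero (hr : ∀ l, 0 < l → ∀ᶠ α in 𝓝[>] (0:ℝ), G.r α l = 0)
    (s ρ : ℝ → ℝ) : weakPair G s ρ := fun l hl =>
  ⟨0, (hr l hl).mono fun α hα => by rw [hα, abs_zero, mul_zero, zero_div]⟩

theorem not_strongPair_of_eventually_r_eq_zero (hl : 0 < l)
    (hr : ∀ᶠ α in 𝓝[>] (0:ℝ), G.r α l = 0) (s ρ : ℝ → ℝ) : ¬ strongPair G s ρ := by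
  rintro ⟨-, h_pos⟩
  have h_zero : ∀ᶠ α in 𝓝[>] (0:ℝ), s l * |G.r α l| / ρ α = 0 :=
    hr.mono fun α hα => by rw [hα, abs_zero, mul_zero, zero_div]
  have := h_pos l hl
  rw [limsup_congr h_zero, limsup_const] at this
  exact this.false

end SRM

/-- Example 2 (TSVD): every `ρ ∈ 𝒪` is weak qualification, `s_ρ(λ) = +∞` for all
`λ > 0`, and the method has no strong qualification. -/
theorem tsvd_no_strong (G : SRM)
    (hg : ∀ α ∈ Ioo (0:ℝ) G.α₀, ∀ l : ℝ, 0 ≤ l →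
      G.g α l = if α ≤ l then 1 / l else 0) :
    (∀ ρ : ℝ → ℝ, memO ρ → ∀ l, 0 < l → G.sLow ρ l = ⊤) ∧
    (∀ ρ : ℝ → ℝ, memO ρ → weakQual G ρ) ∧
    ¬ ∃ ρ : ℝ → ℝ, memO ρ ∧ strongQual G ρ := by
  have hr : ∀ l, 0 < l → ∀ᶠ α in 𝓝[>] (0:ℝ), G.r α l = 0 := fun l hl =>
    SRM.eventually_r_eq_zero_of_tsvd hg hl
  refine ⟨fun ρ hρ l hl => SRM.sLow_eq_top_of_eventually_r_eq_zero hρ.1 (hr l hl),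
    fun ρ _ => ⟨id, memS_id, SRM.weakPair_of_eventually_r_eq_zero hr id ρ⟩, ?_⟩
  rintro ⟨ρ, -, s, -, h_strong⟩
  exact SRM.not_strongPair_of_eventually_r_eq_zero one_pos (hr 1 one_pos) s ρ h_strong
end

section
/- For the SRM defined by g_α(λ) = (1-e^{-1/α})/(λ+e^{-1/α}), so that r_α(λ)=(1+λ)/(1+λe^{1/α}), the function ρ(α)=e^{-1/α} is optimal qualification: s_ρ(λ)=λ/(1+λ) for all λ>0, and s_ρ(λ)|r_α(λ)|/ρ(α) = λ/(λ+e^{-1/α}) ≥ 1/2 for all λ ≥ e^{-1/α}. Moreover this method has no classical qualification: for every μ>0 and λ≥0, |r_α(λ)|λ^μ/α^μ → 0 as α→0⁺. -/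
open Filter Topology Set

/-! With `e = exp (-1/α)` the remainder is `r_α(λ) = e(1 + λ)/(λ + e)`. Hence
`e/|r_α(λ)| = (λ + e)/(1 + λ) → λ/(1 + λ) = s(λ)`, and `s(λ)|r_α(λ)|/e = λ/(λ + e)` tends to `1`
(strong source-order pair) and is at least `1/2` once `λ ≥ e` (order-source pair). On the other
hand `|r_α(λ)| ≤ e(1 + λ)/λ` decays faster than any power of `α`. -/

open Real

lemma tendsto_exp_neg_one_div_nhdsGT_zero :
    Tendsto (fun a : ℝ => exp (-1 / a)) (𝓝[>] 0) (𝓝 0) := by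
  refine (tendsto_exp_atBot.comp (tendsto_neg_atTop_atBot.comp tendsto_inv_nhdsGT_zero)).congr
    fun a => ?_
  simp [neg_div]

lemma tendsto_exp_neg_one_div_div_rpow_nhdsGT_zero (μ : ℝ) :
    Tendsto (fun a : ℝ => exp (-1 / a) / a ^ μ) (𝓝[>] 0) (𝓝 0) := by
  have h : Tendsto (fun x : ℝ => x ^ μ * exp (-x)) atTop (𝓝 0) := by
    simpa using tendsto_rpow_mul_exp_neg_mul_atTop_nhds_zero μ 1 one_pos
  refine (h.comp tendsto_inv_nhdsGT_zero).congr' ?_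
  filter_upwards [self_mem_nhdsWithin] with a (ha : 0 < a)
  simp only [Function.comp_apply, inv_rpow ha.le, neg_div, one_div]
  ring

lemma one_half_le_div_add_of_le {x y : ℝ} (hy : 0 < y) (h : y ≤ x) : 1 / 2 ≤ x / (x + y) := by
  rw [le_div_iff₀ (by linarith)]
  linarith

lemma memS_div_one_add : memS fun l => l / (1 + l) := by
  refine ⟨?_, by simp, fun l hl => by positivity, fun l hl => by positivity⟩
  exact continuousOn_id.div (continuousOn_const.add continuousOn_id)
    fun x (hx : 0 ≤ x) => by positivity

namespace SRM

lemma eventually_mem_Ioo (G : SRM) : ∀ᶠ α in 𝓝[>] (0:ℝ), α ∈ Ioo 0 G.α₀ :=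
  Ioo_mem_nhdsGT G.hα₀

def IsExpShiftMethod (G : SRM) : Prop :=
  ∀ α ∈ Ioo (0:ℝ) G.α₀, ∀ l : ℝ, 0 ≤ l → G.g α l = (1 - exp (-1 / α)) / (l + exp (-1 / α))

variable {G : SRM}

lemma IsExpShiftMethod.r_eq (hG : G.IsExpShiftMethod) {α l : ℝ} (hα : α ∈ Ioo 0 G.α₀)
    (hl : 0 ≤ l) : G.r α l = exp (-1 / α) * (1 + l) / (l + exp (-1 / α)) := by
  have : l + exp (-1 / α) ≠ 0 := by positivity
  rw [r, hG α hα l hl]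
  field_simp
  ring

lemma IsExpShiftMethod.abs_r_eq (hG : G.IsExpShiftMethod) {α l : ℝ} (hα : α ∈ Ioo 0 G.α₀)
    (hl : 0 ≤ l) : |G.r α l| = exp (-1 / α) * (1 + l) / (l + exp (-1 / α)) := by
  rw [hG.r_eq hα hl, abs_of_pos (by positivity)]

lemma IsExpShiftMethod.exp_div_abs_r (hG : G.IsExpShiftMethod) {α l : ℝ}
    (hα : α ∈ Ioo 0 G.α₀) (hl : 0 ≤ l) :
    exp (-1 / α) / |G.r α l| = (l + exp (-1 / α)) / (1 + l) := by
  rw [hG.abs_r_eq hα hl]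
  field_simp

lemma IsExpShiftMethod.source_mul_abs_r_div (hG : G.IsExpShiftMethod) {α l : ℝ}
    (hα : α ∈ Ioo 0 G.α₀) (hl : 0 < l) :
    l / (1 + l) * |G.r α l| / exp (-1 / α) = l / (l + exp (-1 / α)) := by
  rw [hG.abs_r_eq hα hl.le]
  field_simp

lemma IsExpShiftMethod.abs_r_le (hG : G.IsExpShiftMethod) {α l : ℝ} (hα : α ∈ Ioo 0 G.α₀)
    (hl : 0 < l) : |G.r α l| ≤ exp (-1 / α) * (1 + l) / l := by
  rw [hG.abs_r_eq hα hl.le]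
  gcongr
  linarith [exp_pos (-1 / α)]

lemma IsExpShiftMethod.tendsto_source_mul_abs_r_div (hG : G.IsExpShiftMethod) {l : ℝ}
    (hl : 0 < l) :
    Tendsto (fun α => l / (1 + l) * |G.r α l| / exp (-1 / α)) (𝓝[>] 0) (𝓝 1) := by
  have h : Tendsto (fun α : ℝ => l / (l + exp (-1 / α))) (𝓝[>] 0) (𝓝 (l / (l + 0))) :=
    tendsto_const_nhds.div (tendsto_const_nhds.add tendsto_exp_neg_one_div_nhdsGT_zero)
      (by simpa using hl.ne')
  rw [add_zero, div_self hl.ne'] at h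
  refine h.congr' ?_
  filter_upwards [G.eventually_mem_Ioo] with α hα
  exact (hG.source_mul_abs_r_div hα hl).symm

lemma IsExpShiftMethod.sLow_eq (hG : G.IsExpShiftMethod) {l : ℝ} (hl : 0 < l) :
    G.sLow (fun a => exp (-1 / a)) l = ENNReal.ofReal (l / (1 + l)) := by
  have h : Tendsto (fun α : ℝ => (l + exp (-1 / α)) / (1 + l)) (𝓝[>] 0)
      (𝓝 ((l + 0) / (1 + l))) :=
    (tendsto_const_nhds.add tendsto_exp_neg_one_div_nhdsGT_zero).div_const _
  rw [add_zero] at h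
  refine ((ENNReal.tendsto_ofReal h).congr' ?_).liminf_eq
  filter_upwards [G.eventually_mem_Ioo] with α hα
  have hr : 0 < |G.r α l| := by rw [hG.abs_r_eq hα hl.le]; positivity
  rw [← hG.exp_div_abs_r hα hl.le, ENNReal.ofReal_div_of_pos hr]

lemma IsExpShiftMethod.strongPair (hG : G.IsExpShiftMethod) :
    strongPair G (fun l => l / (1 + l)) fun a => exp (-1 / a) := by
  refine ⟨fun l hl => ⟨2, ?_⟩, fun l hl => ?_⟩
  · exact (hG.tendsto_source_mul_abs_r_div hl).eventually_le_const one_lt_two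
  · rw [(hG.tendsto_source_mul_abs_r_div hl).limsup_eq]
    exact one_pos

lemma IsExpShiftMethod.orderSourcePair (hG : G.IsExpShiftMethod) :
    orderSourcePair G (fun a => exp (-1 / a)) fun l => l / (1 + l) := by
  refine ⟨1 / 2, one_half_pos, fun a => exp (-1 / a), fun _ _ => exp_pos _,
    tendsto_exp_neg_one_div_nhdsGT_zero, fun α hα l hl => ?_⟩
  have hl0 : 0 < l := (exp_pos _).trans_le hl
  rw [hG.source_mul_abs_r_div hα hl0]
  exact one_half_le_div_add_of_le (exp_pos _) hl

lemma IsExpShiftMethod.optQual (hG : G.IsExpShiftMethod) :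
    optQual G fun a => exp (-1 / a) :=
  ⟨_, memS_div_one_add, hG.strongPair, hG.orderSourcePair⟩

lemma IsExpShiftMethod.tendsto_abs_r_mul_rpow_div_rpow (hG : G.IsExpShiftMethod) {μ l : ℝ}
    (hμ : 0 < μ) (hl : 0 ≤ l) :
    Tendsto (fun α => |G.r α l| * l ^ μ / α ^ μ) (𝓝[>] 0) (𝓝 0) := by
  rcases hl.eq_or_lt with rfl | hl
  · simp [zero_rpow hμ.ne']
  have h := (tendsto_exp_neg_one_div_div_rpow_nhdsGT_zero μ).const_mul ((1 + l) / l * l ^ μ)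
  rw [mul_zero] at h
  refine squeeze_zero' ?_ ?_ h
  · filter_upwards [self_mem_nhdsWithin] with α (hα : 0 < α)
    positivity
  · filter_upwards [G.eventually_mem_Ioo] with α hα
    have hαμ : 0 < α ^ μ := rpow_pos_of_pos hα.1 μ
    calc |G.r α l| * l ^ μ / α ^ μ ≤ exp (-1 / α) * (1 + l) / l * l ^ μ / α ^ μ := by
          gcongr
          exact hG.abs_r_le hα hl
      _ = (1 + l) / l * l ^ μ * (exp (-1 / α) / α ^ μ) := by ring

end SRM

/-- Example 3: for `g_α(λ)=(1-e^{-1/α})/(λ+e^{-1/α})` (so `r_α(λ)=(1+λ)/(1+λe^{1/α})`),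
`ρ(α)=e^{-1/α}` is optimal qualification with `s_ρ(λ)=λ/(1+λ)`, the order-source
inequality holds with `γ = 1/2`, `h(α)=e^{-1/α}`, and the method has no classical
qualification: `|r_α(λ)|λ^μ/α^μ → 0` for every `μ > 0`, `λ ≥ 0`. -/
theorem example3_optimal (G : SRM)
    (hg : ∀ α ∈ Ioo (0:ℝ) G.α₀, ∀ l : ℝ, 0 ≤ l →
      G.g α l = (1 - Real.exp (-1/α)) / (l + Real.exp (-1/α))) :
    (∀ l : ℝ, 0 < l →
      G.sLow (fun a => Real.exp (-1/a)) l = ENNReal.ofReal (l / (1 + l))) ∧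
    (∀ α : ℝ, 0 < α → ∀ l : ℝ, Real.exp (-1/α) ≤ l →
      (1:ℝ)/2 ≤ l / (l + Real.exp (-1/α))) ∧
    optQual G (fun a => Real.exp (-1/a)) ∧
    (∀ μ : ℝ, 0 < μ → ∀ l : ℝ, 0 ≤ l →
      Tendsto (fun α => |G.r α l| * l ^ μ / α ^ μ) (𝓝[>] 0) (𝓝 0)) :=
  ⟨fun _ hl => SRM.IsExpShiftMethod.sLow_eq hg hl,
    fun _ _ _ hl => one_half_le_div_add_of_le (exp_pos _) hl,
    SRM.IsExpShiftMethod.optQual hg,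
    fun _ hμ _ hl => SRM.IsExpShiftMethod.tendsto_abs_r_mul_rpow_div_rpow hg hμ hl⟩
end

section
/- Fix k>0 and define r_α(λ) = e^{-λ/α} + α^k λ^{-1/2}|sin(λ^{3/2}/α)| for α,λ>0. Then with ρ(α)=α^k: (i) s_ρ(λ) := liminf_{α→0⁺} ρ(α)/r_α(λ) = λ^{1/2} for every λ>0, hence ρ is strong qualification; (ii) for every λ>0, liminf_{α→0⁺} λ^{1/2} r_α(λ)/α^k = 0, hence ρ is not optimal qualification. -/
/-!
After normalisation, `√λ r_α(λ) / α^k = √λ e^{-λ/α} / α^k + |sin (λ^{3/2}/α)|`. The first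
summand tends to `0` (the exponential beats every power of `α`), while the second keeps
oscillating between `0` and `1` as `α → 0⁺`. Along the `α` with `|sin| = 1` the quotient
`ρ(α) / r_α(λ)` attains its lower envelope `α^k / (e^{-λ/α} + α^k λ^{-1/2}) → √λ`, which gives
`s_ρ(λ) = √λ` and a positive `limsup`; along the `α` with `sin = 0` the normalised residual
tends to `0`, so no uniform lower bound `γ` as in an order-source pair can exist.
-/

open Filter Topology Set

open Real

theorem Filter.liminf_eq_of_tendsto_of_le_of_frequently_eq {ι β : Type*}
    [ConditionallyCompleteLinearOrder β] [TopologicalSpace β] [OrderTopology β]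
    {f : Filter ι} {u v : ι → β} {b : β} (hv : Tendsto v f (𝓝 b)) (hvu : v ≤ᶠ[f] u)
    (hfreq : ∃ᶠ x in f, u x = v x) (hu : IsBoundedUnder (· ≤ ·) f u) :
    liminf u f = b := by
  have hg : NeBot (f ⊓ 𝓟 {x | u x = v x}) := frequently_iff_neBot.1 hfreq
  have : NeBot f := hg.mono inf_le_left
  have hu_ge : IsBoundedUnder (· ≥ ·) f u := hv.isBoundedUnder_ge.mono_ge hvu
  apply le_antisymm
  · calc liminf u f ≤ liminf u (f ⊓ 𝓟 {x | u x = v x}) :=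
          liminf_le_liminf_of_le inf_le_left hu_ge
            (hu.mono inf_le_left).isCoboundedUnder_ge
      _ = liminf v (f ⊓ 𝓟 {x | u x = v x}) :=
          liminf_congr (mem_inf_of_right (mem_principal_self _))
      _ = b := (hv.mono_left inf_le_left).liminf_eq
  · calc b = liminf v f := hv.liminf_eq.symm
      _ ≤ liminf u f := liminf_le_liminf hvu hv.isBoundedUnder_ge hu.isCoboundedUnder_ge

theorem Filter.Frequently.const_div_nhdsGT_zero {p : ℝ → Prop} (hp : ∃ᶠ x in atTop, p x)
    {c : ℝ} (hc : 0 < c) : ∃ᶠ α in 𝓝[>] 0, p (c / α) := by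
  have hdiv : Tendsto (fun x : ℝ => c / x) atTop (𝓝[>] 0) :=
    tendsto_nhdsWithin_iff.2 ⟨tendsto_id.const_div_atTop c,
      (eventually_gt_atTop 0).mono fun x hx => div_pos hc hx⟩
  refine hdiv.frequently ((hp.and_eventually (eventually_gt_atTop 0)).mono ?_)
  rintro x ⟨hpx, hx⟩
  rwa [div_div_cancel₀ hc.ne']

theorem Real.frequently_sin_eq_zero_atTop : ∃ᶠ x in atTop, sin x = 0 :=
  (tendsto_natCast_atTop_atTop.atTop_mul_const pi_pos).frequently
    (Frequently.of_forall sin_nat_mul_pi)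

theorem Real.frequently_abs_sin_eq_one_atTop : ∃ᶠ x in atTop, |sin x| = 1 := by
  refine (tendsto_atTop_add_const_left _ (π / 2)
    (tendsto_natCast_atTop_atTop.atTop_mul_const pi_pos)).frequently
    (Frequently.of_forall fun n : ℕ => ?_)
  simp [sin_add_nat_mul_pi]

theorem Real.tendsto_exp_neg_div_div_rpow_nhdsGT_zero {l : ℝ} (hl : 0 < l) (k : ℝ) :
    Tendsto (fun α => exp (-l / α) / α ^ k) (𝓝[>] 0) (𝓝 0) := by
  refine ((tendsto_rpow_mul_exp_neg_mul_atTop_nhds_zero k l hl).comp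
    tendsto_inv_nhdsGT_zero).congr' ?_
  filter_upwards [self_mem_nhdsWithin] with α (hα : 0 < α)
  rw [Function.comp_apply, inv_rpow hα.le, div_eq_mul_inv, div_eq_mul_inv, neg_mul, mul_comm]

theorem memS_sqrt : memS sqrt :=
  ⟨continuous_sqrt.continuousOn, sqrt_zero, fun x _ => sqrt_nonneg x, fun _ hx => sqrt_pos.2 hx⟩

theorem SRM.eventually_r_eq {G : SRM} {f : ℝ → ℝ → ℝ}
    (hr : ∀ α ∈ Ioo (0:ℝ) G.α₀, ∀ l : ℝ, 0 < l → G.r α l = f α l) {l : ℝ} (hl : 0 < l) :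
    ∀ᶠ α in 𝓝[>] 0, G.r α l = f α l := by
  filter_upwards [Ioo_mem_nhdsGT G.hα₀] with α hα using hr α hα l hl

theorem orderSourcePair.exists_eventually_le {G : SRM} {ρ s : ℝ → ℝ}
    (h : orderSourcePair G ρ s) :
    ∃ γ > 0, ∀ l > 0, ∀ᶠ α in 𝓝[>] 0, γ ≤ s l * |G.r α l| / ρ α := by
  obtain ⟨γ, hγ, h, -, hh, hle⟩ := h
  refine ⟨γ, hγ, fun l hl => ?_⟩
  filter_upwards [Ioo_mem_nhdsGT G.hα₀, hh.eventually_lt_const hl] with α hα hhα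
  exact hle α hα l hhα.le

theorem tendsto_rpow_div_exp_neg_div_add_rpow_mul {l : ℝ} (hl : 0 < l) (k : ℝ) {c : ℝ}
    (hc : 0 < c) :
    Tendsto (fun α => α ^ k / (exp (-l / α) + α ^ k * c)) (𝓝[>] 0) (𝓝 c⁻¹) := by
  have h := ((tendsto_exp_neg_div_div_rpow_nhdsGT_zero hl k).add_const c).inv₀
  rw [zero_add] at h
  refine (h hc.ne').congr' ?_
  filter_upwards [self_mem_nhdsWithin] with α (hα : 0 < α)
  have : 0 < α ^ k := by positivity
  rw [div_add' _ _ _ this.ne', inv_div, mul_comm]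

noncomputable def oscillatingResidual (k α l : ℝ) : ℝ :=
  exp (-l / α) + α ^ k * l ^ (-(1:ℝ) / 2) * |sin (l ^ ((3:ℝ) / 2) / α)|

section oscillatingResidual

variable {k α l : ℝ}

theorem oscillatingResidual_pos (hα : 0 < α) (hl : 0 < l) : 0 < oscillatingResidual k α l := by
  unfold oscillatingResidual
  positivity

theorem oscillatingResidual_le (hα : 0 < α) (hl : 0 < l) :
    oscillatingResidual k α l ≤ exp (-l / α) + α ^ k * l ^ (-(1:ℝ) / 2) := by
  unfold oscillatingResidual
  exact (add_le_add_iff_left _).2 (mul_le_of_le_one_right (by positivity) (abs_sin_le_one _))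

theorem sqrt_mul_oscillatingResidual_div (hα : 0 < α) (hl : 0 < l) :
    √l * oscillatingResidual k α l / α ^ k
      = √l * (exp (-l / α) / α ^ k) + |sin (l ^ ((3:ℝ) / 2) / α)| := by
  have hsqrt : √l * l ^ (-(1:ℝ) / 2) = 1 := by
    rw [sqrt_eq_rpow, ← rpow_add hl]
    norm_num
  have : 0 < α ^ k := by positivity
  rw [oscillatingResidual, mul_add, add_div, mul_div_assoc]
  congr 1
  rw [div_eq_iff this.ne']
  linear_combination α ^ k * |sin (l ^ ((3:ℝ) / 2) / α)| * hsqrt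

theorem liminf_rpow_div_oscillatingResidual (hl : 0 < l) :
    liminf (fun α => ENNReal.ofReal (α ^ k) / ENNReal.ofReal (oscillatingResidual k α l))
      (𝓝[>] 0) = ENNReal.ofReal √l := by
  have hpos : ∀ᶠ α in 𝓝[>] (0:ℝ), 0 < α := self_mem_nhdsWithin
  have hc : 0 < l ^ (-(1:ℝ) / 2) := by positivity
  have hinv : (l ^ (-(1:ℝ) / 2))⁻¹ = √l := by
    rw [sqrt_eq_rpow, ← rpow_neg hl.le]
    norm_num
  refine liminf_eq_of_tendsto_of_le_of_frequently_eq
    (v := fun α => ENNReal.ofReal (α ^ k / (exp (-l / α) + α ^ k * l ^ (-(1:ℝ) / 2))))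
    ?_ ?_ ?_ isBounded_le_of_top
  · rw [← hinv]
    exact (ENNReal.continuous_ofReal.tendsto _).comp
      (tendsto_rpow_div_exp_neg_div_add_rpow_mul hl k hc)
  · filter_upwards [hpos] with α hα
    rw [← ENNReal.ofReal_div_of_pos (oscillatingResidual_pos hα hl)]
    exact ENNReal.ofReal_le_ofReal (div_le_div_of_nonneg_left (by positivity)
      (oscillatingResidual_pos hα hl) (oscillatingResidual_le hα hl))
  · refine ((frequently_abs_sin_eq_one_atTop.const_div_nhdsGT_zero
      (rpow_pos_of_pos hl ((3:ℝ) / 2))).and_eventually hpos).mono ?_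
    rintro α ⟨hsin, hα⟩
    rw [← ENNReal.ofReal_div_of_pos (oscillatingResidual_pos hα hl), oscillatingResidual,
      hsin, mul_one]

theorem isBoundedUnder_sqrt_mul_oscillatingResidual_div (hl : 0 < l) :
    IsBoundedUnder (· ≤ ·) (𝓝[>] 0) (fun α => √l * oscillatingResidual k α l / α ^ k) := by
  refine (((tendsto_exp_neg_div_div_rpow_nhdsGT_zero hl k).const_mul √l).add_const
    1).isBoundedUnder_le.mono_le ?_
  filter_upwards [self_mem_nhdsWithin] with α (hα : 0 < α)
  rw [sqrt_mul_oscillatingResidual_div hα hl]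
  gcongr
  exact abs_sin_le_one _

theorem liminf_sqrt_mul_oscillatingResidual_div (hl : 0 < l) :
    liminf (fun α => √l * oscillatingResidual k α l / α ^ k) (𝓝[>] 0) = 0 := by
  have hpos : ∀ᶠ α in 𝓝[>] (0:ℝ), 0 < α := self_mem_nhdsWithin
  refine liminf_eq_of_tendsto_of_le_of_frequently_eq (v := fun α => √l * (exp (-l / α) / α ^ k))
    (by simpa using (tendsto_exp_neg_div_div_rpow_nhdsGT_zero hl k).const_mul √l) ?_ ?_
    (isBoundedUnder_sqrt_mul_oscillatingResidual_div hl)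
  · filter_upwards [hpos] with α hα
    rw [sqrt_mul_oscillatingResidual_div hα hl]
    exact le_add_of_nonneg_right (abs_nonneg _)
  · refine ((frequently_sin_eq_zero_atTop.const_div_nhdsGT_zero
      (rpow_pos_of_pos hl ((3:ℝ) / 2))).and_eventually hpos).mono ?_
    rintro α ⟨hsin, hα⟩
    rw [sqrt_mul_oscillatingResidual_div hα hl, hsin, abs_zero, add_zero]

theorem frequently_sqrt_mul_oscillatingResidual_div_lt (hl : 0 < l) {ε : ℝ} (hε : 0 < ε) :
    ∃ᶠ α in 𝓝[>] 0, √l * oscillatingResidual k α l / α ^ k < ε :=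
  frequently_lt_of_liminf_lt
    (isBoundedUnder_sqrt_mul_oscillatingResidual_div hl).isCoboundedUnder_ge
    (by rwa [liminf_sqrt_mul_oscillatingResidual_div hl])

theorem one_le_limsup_sqrt_mul_oscillatingResidual_div (hl : 0 < l) :
    1 ≤ limsup (fun α => √l * oscillatingResidual k α l / α ^ k) (𝓝[>] 0) := by
  refine le_limsup_of_frequently_le ?_ (isBoundedUnder_sqrt_mul_oscillatingResidual_div hl)
  refine ((frequently_abs_sin_eq_one_atTop.const_div_nhdsGT_zero
    (rpow_pos_of_pos hl ((3:ℝ) / 2))).and_eventually self_mem_nhdsWithin).mono ?_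
  rintro α ⟨hsin, hα : 0 < α⟩
  rw [sqrt_mul_oscillatingResidual_div hα hl, hsin]
  exact le_add_of_nonneg_left (by positivity)

end oscillatingResidual

theorem example8_strong_not_optimal_general (G : SRM) (k : ℝ)
    (hr : ∀ α ∈ Ioo (0:ℝ) G.α₀, ∀ l : ℝ, 0 < l →
      G.r α l = Real.exp (-l/α)
        + α ^ k * l ^ (-(1:ℝ)/2) * |Real.sin (l ^ ((3:ℝ)/2) / α)|) :
    (∀ l : ℝ, 0 < l →
      G.sLow (fun a => a ^ k) l = ENNReal.ofReal (Real.sqrt l)) ∧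
    strongQual G (fun a => a ^ k) ∧
    (∀ l : ℝ, 0 < l →
      Filter.liminf (fun α => Real.sqrt l * G.r α l / α ^ k) (𝓝[>] (0:ℝ)) = 0) ∧
    ¬ optQual G (fun a => a ^ k) := by
  have hR (l : ℝ) (hl : 0 < l) : ∀ᶠ α in 𝓝[>] 0, G.r α l = oscillatingResidual k α l :=
    G.eventually_r_eq hr hl
  have habsR (l : ℝ) (hl : 0 < l) : ∀ᶠ α in 𝓝[>] 0, |G.r α l| = oscillatingResidual k α l := by
    filter_upwards [hR l hl, self_mem_nhdsWithin] with α hα (hα0 : 0 < α)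
    rw [hα, abs_of_pos (oscillatingResidual_pos hα0 hl)]
  refine ⟨fun l hl => ?_, ⟨sqrt, memS_sqrt, fun l hl => ?_, fun l hl => ?_⟩, fun l hl => ?_, ?_⟩
  · refine (liminf_congr ?_).trans (liminf_rpow_div_oscillatingResidual (k := k) hl)
    filter_upwards [habsR l hl] with α hα
    rw [hα]
  · obtain ⟨b, hb⟩ := isBoundedUnder_sqrt_mul_oscillatingResidual_div (k := k) hl
    refine ⟨b, ?_⟩
    filter_upwards [eventually_map.1 hb, habsR l hl] with α hle hα
    rwa [hα]
  · rw [limsup_congr (by filter_upwards [habsR l hl] with α hα; rw [hα])]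
    exact one_pos.trans_le (one_le_limsup_sqrt_mul_oscillatingResidual_div hl)
  · refine (liminf_congr ?_).trans (liminf_sqrt_mul_oscillatingResidual_div (k := k) hl)
    filter_upwards [hR l hl] with α hα
    rw [hα]
  · rintro ⟨s, hs, -, hos⟩
    obtain ⟨γ, hγ, hγle⟩ := hos.exists_eventually_le
    have hs1 : 0 < s 1 := hs.2.2.2 1 one_pos
    obtain ⟨α, hlt, hge, hα⟩ := ((frequently_sqrt_mul_oscillatingResidual_div_lt one_pos
      (div_pos hγ hs1)).and_eventually ((hγle 1 one_pos).and (habsR 1 one_pos))).exists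
    rw [sqrt_one, one_mul, lt_div_iff₀' hs1] at hlt
    rw [hα, mul_div_assoc] at hge
    exact hge.not_gt hlt

/-- Example 8: with `r_α(λ) = e^{-λ/α} + α^k λ^{-1/2}|sin(λ^{3/2}/α)|` and `ρ(α)=α^k`,
one has `s_ρ(λ)=λ^{1/2}` (so `ρ` is strong qualification), but
`liminf_{α→0⁺} λ^{1/2} r_α(λ)/α^k = 0`, so `ρ` is not optimal qualification. -/
theorem example8_strong_not_optimal (G : SRM) (k : ℝ) (hk : 0 < k)
    (hr : ∀ α ∈ Ioo (0:ℝ) G.α₀, ∀ l : ℝ, 0 < l →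
      G.r α l = Real.exp (-l/α)
        + α ^ k * l ^ (-(1:ℝ)/2) * |Real.sin (l ^ ((3:ℝ)/2) / α)|) :
    (∀ l : ℝ, 0 < l →
      G.sLow (fun a => a ^ k) l = ENNReal.ofReal (Real.sqrt l)) ∧
    strongQual G (fun a => a ^ k) ∧
    (∀ l : ℝ, 0 < l →
      Filter.liminf (fun α => Real.sqrt l * G.r α l / α ^ k) (𝓝[>] (0:ℝ)) = 0) ∧
    ¬ optQual G (fun a => a ^ k) :=
  example8_strong_not_optimal_general G k hr
end

section
/- Define r_α(λ) = e^{-λ/α} + e^{-1/√α} λ^{-1/2}|sin(λ^{3/2}/α)| for α,λ>0 and ρ(α)=e^{-1/√α}. Then s_ρ(λ) = liminf_{α→0⁺} ρ(α)/r_α(λ) = λ^{1/2} for every λ>0 (so ρ is strong qualification), but for every λ>0, liminf_{α→0⁺} λ^{1/2} r_α(λ)/ρ(α) = liminf_{α→0⁺} (λ^{1/2} e^{1/√α - λ/α} + |sin(λ^{3/2}/α)|) = 0, so ρ is not optimal qualification. -/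
open Filter Topology Set

/-!
For `λ > 0` and `α` small, `λ^{1/2} r_α(λ) / ρ(α) = λ^{1/2} e^{1/√α - λ/α} + |sin(λ^{3/2}/α)|`.
The first term tends to `0` as `α → 0⁺`, while the second equals `1` along
`α = λ^{3/2}/(π/2 + 2nπ)` and `0` along `α = λ^{3/2}/(nπ)`. The first sequence gives
`s_ρ(λ) = λ^{1/2}` and a positive limsup (strong qualification); the second gives liminf `0`,
which is incompatible with the uniform lower bound of an order-source pair.
-/

lemma frequently_nhdsGT_zero_const_div {c : ℝ} (hc : 0 < c) {p : ℝ → Prop}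
    (h : ∃ᶠ x in atTop, p x) : ∃ᶠ α in 𝓝[>] (0:ℝ), p (c / α) := by
  have hdiv : Tendsto (c / ·) atTop (𝓝[>] (0:ℝ)) :=
    tendsto_nhdsWithin_iff.2 ⟨tendsto_const_nhds.div_atTop tendsto_id,
      (eventually_gt_atTop 0).mono fun x hx => div_pos hc hx⟩
  refine hdiv.frequently (h.mp ((eventually_gt_atTop 0).mono fun x hx hpx => ?_))
  rwa [div_div_cancel₀ hc.ne']

lemma frequently_sin_div_eq_zero {c : ℝ} (hc : 0 < c) :
    ∃ᶠ α in 𝓝[>] (0:ℝ), Real.sin (c / α) = 0 :=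
  frequently_nhdsGT_zero_const_div (p := fun x => Real.sin x = 0) hc <|
    (tendsto_natCast_atTop_atTop.atTop_mul_const Real.pi_pos).frequently
      (Frequently.of_forall Real.sin_nat_mul_pi)

lemma frequently_sin_div_eq_one {c : ℝ} (hc : 0 < c) :
    ∃ᶠ α in 𝓝[>] (0:ℝ), Real.sin (c / α) = 1 :=
  frequently_nhdsGT_zero_const_div (p := fun x => Real.sin x = 1) hc <|
    (tendsto_atTop_add_const_left _ (Real.pi / 2)
      (tendsto_natCast_atTop_atTop.atTop_mul_const Real.two_pi_pos)).frequently
      (Frequently.of_forall fun n => by rw [Real.sin_add_nat_mul_two_pi, Real.sin_pi_div_two])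

lemma tendsto_exp_inv_sqrt_sub_div {l : ℝ} (hl : 0 < l) :
    Tendsto (fun α => Real.exp (1 / Real.sqrt α - l / α)) (𝓝[>] (0:ℝ)) (𝓝 0) := by
  have hsqrt : Tendsto (fun α => Real.sqrt α - l) (𝓝[>] (0:ℝ)) (𝓝 (-l)) := by
    simpa using ((Real.continuous_sqrt.tendsto 0).mono_left nhdsWithin_le_nhds).sub_const l
  have hexp : Tendsto (fun α => (Real.sqrt α - l) * α⁻¹) (𝓝[>] (0:ℝ)) atBot :=
    hsqrt.neg_mul_atTop (neg_lt_zero.2 hl) tendsto_inv_nhdsGT_zero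
  refine Real.tendsto_exp_atBot.comp (hexp.congr' ?_)
  filter_upwards [self_mem_nhdsWithin] with α (hα : 0 < α)
  rw [← Real.sqrt_div_self', div_eq_mul_inv, div_eq_mul_inv]
  ring

lemma liminf_eq_zero_of_frequently_lt {ι : Type*} {L : Filter ι} {f : ι → ℝ}
    (h0 : ∀ᶠ x in L, 0 ≤ f x) (h : ∀ ε > 0, ∃ᶠ x in L, f x < ε) : liminf f L = 0 := by
  have hcobdd : IsCoboundedUnder (· ≥ ·) L f :=
    ⟨1, fun a ha =>
      ((h 1 one_pos).and_eventually ha).exists.elim fun x hx => hx.2.trans hx.1.le⟩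
  refine le_antisymm (le_of_forall_pos_le_add fun ε hε => ?_) (le_liminf_of_le hcobdd h0)
  rw [zero_add]
  exact liminf_le_of_frequently_le ((h ε hε).mono fun x hx => hx.le) ⟨0, h0⟩

lemma not_orderSourcePair_of_frequently_lt {G : SRM} {ρ s : ℝ → ℝ} {l : ℝ} (hl : 0 < l)
    (hsmall : ∀ γ > 0, ∃ᶠ α in 𝓝[>] (0:ℝ), s l * |G.r α l| / ρ α < γ) :
    ¬ orderSourcePair G ρ s := by
  rintro ⟨γ, hγ, h, -, hh, hbound⟩
  have hlarge : ∀ᶠ α in 𝓝[>] (0:ℝ), γ ≤ s l * |G.r α l| / ρ α := by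
    filter_upwards [Ioo_mem_nhdsGT G.hα₀, hh.eventually_le_const hl] with α hα hhα
    exact hbound α hα l hhα
  exact ((hsmall γ hγ).and_eventually hlarge).exists.elim fun α hα => hα.1.not_ge hα.2

lemma memS_sqrt_s16 : memS Real.sqrt :=
  ⟨Real.continuous_sqrt.continuousOn, Real.sqrt_zero, fun l _ => Real.sqrt_nonneg l,
    fun _ hl => Real.sqrt_pos.2 hl⟩

noncomputable def scaledResidual (l α : ℝ) : ℝ :=
  Real.sqrt l * Real.exp (1 / Real.sqrt α - l / α) + |Real.sin (l ^ ((3:ℝ)/2) / α)|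

section scaledResidual

variable {l : ℝ}

lemma scaledResidual_nonneg (l α : ℝ) : 0 ≤ scaledResidual l α := by
  unfold scaledResidual; positivity

lemma scaledResidual_pos (hl : 0 < l) (α : ℝ) : 0 < scaledResidual l α := by
  have := Real.sqrt_pos.2 hl
  unfold scaledResidual; positivity

lemma scaledResidual_le (l α : ℝ) :
    scaledResidual l α ≤ Real.sqrt l * Real.exp (1 / Real.sqrt α - l / α) + 1 :=
  add_le_add_right (Real.abs_sin_le_one _) _

lemma tendsto_sqrt_mul_exp_inv_sqrt_sub_div (hl : 0 < l) :
    Tendsto (fun α => Real.sqrt l * Real.exp (1 / Real.sqrt α - l / α)) (𝓝[>] (0:ℝ))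
      (𝓝 0) := by
  simpa only [mul_zero] using (tendsto_exp_inv_sqrt_sub_div hl).const_mul (Real.sqrt l)

lemma tendsto_scaledResidual_envelope (hl : 0 < l) :
    Tendsto (fun α => Real.sqrt l * Real.exp (1 / Real.sqrt α - l / α) + 1) (𝓝[>] (0:ℝ))
      (𝓝 1) := by
  simpa only [zero_add] using (tendsto_sqrt_mul_exp_inv_sqrt_sub_div hl).add_const 1

lemma eventually_scaledResidual_le_two (hl : 0 < l) :
    ∀ᶠ α in 𝓝[>] (0:ℝ), scaledResidual l α ≤ 2 :=
  ((tendsto_scaledResidual_envelope hl).eventually_le_const one_lt_two).mono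
    fun α hα => (scaledResidual_le l α).trans hα

lemma frequently_one_le_scaledResidual (hl : 0 < l) :
    ∃ᶠ α in 𝓝[>] (0:ℝ), 1 ≤ scaledResidual l α :=
  (frequently_sin_div_eq_one (Real.rpow_pos_of_pos hl ((3:ℝ)/2))).mono fun α hα => by
    rw [scaledResidual, hα, abs_one]
    exact le_add_of_nonneg_left (by positivity)

lemma frequently_scaledResidual_lt (hl : 0 < l) {ε : ℝ} (hε : 0 < ε) :
    ∃ᶠ α in 𝓝[>] (0:ℝ), scaledResidual l α < ε := by
  have hsmall := (tendsto_sqrt_mul_exp_inv_sqrt_sub_div hl).eventually_lt_const hε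
  refine ((frequently_sin_div_eq_zero (Real.rpow_pos_of_pos hl ((3:ℝ)/2))).and_eventually
    hsmall).mono ?_
  rintro α ⟨hsin, hα⟩
  rwa [scaledResidual, hsin, abs_zero, add_zero]

lemma liminf_scaledResidual (hl : 0 < l) : liminf (scaledResidual l) (𝓝[>] (0:ℝ)) = 0 :=
  liminf_eq_zero_of_frequently_lt (.of_forall (scaledResidual_nonneg l))
    fun _ hε => frequently_scaledResidual_lt hl hε

end scaledResidual

lemma exp_add_rpow_mul_abs_sin_eq {l : ℝ} (hl : 0 < l) (α : ℝ) :
    Real.exp (-l/α)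
        + Real.exp (-1 / Real.sqrt α) * l ^ (-(1:ℝ)/2) * |Real.sin (l ^ ((3:ℝ)/2) / α)|
      = Real.exp (-1 / Real.sqrt α) * scaledResidual l α / Real.sqrt l := by
  have hsqrt : l ^ (-(1:ℝ)/2) = (Real.sqrt l)⁻¹ := by
    rw [neg_div, Real.rpow_neg hl.le, ← Real.sqrt_eq_rpow]
  have hexp : Real.exp (-l/α)
      = Real.exp (-1 / Real.sqrt α) * Real.exp (1 / Real.sqrt α - l / α) := by
    rw [← Real.exp_add]; ring_nf
  have : Real.sqrt l ≠ 0 := (Real.sqrt_pos.2 hl).ne'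
  rw [hsqrt, hexp, scaledResidual]
  field_simp

namespace SRM

variable {G : SRM}
  (hr : ∀ α ∈ Ioo (0:ℝ) G.α₀, ∀ l : ℝ, 0 < l →
    G.r α l = Real.exp (-1 / Real.sqrt α) * scaledResidual l α / Real.sqrt l)
include hr

lemma sqrt_mul_r_div_eq {α l : ℝ} (hα : α ∈ Ioo (0:ℝ) G.α₀) (hl : 0 < l) :
    Real.sqrt l * G.r α l / Real.exp (-1 / Real.sqrt α) = scaledResidual l α := by
  have : Real.sqrt l ≠ 0 := (Real.sqrt_pos.2 hl).ne'
  rw [hr α hα l hl]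
  field_simp

lemma r_pos {α l : ℝ} (hα : α ∈ Ioo (0:ℝ) G.α₀) (hl : 0 < l) : 0 < G.r α l := by
  have := scaledResidual_pos hl α
  have := Real.sqrt_pos.2 hl
  rw [hr α hα l hl]
  positivity

lemma sqrt_mul_r_div_eventuallyEq {l : ℝ} (hl : 0 < l) :
    (fun α => Real.sqrt l * G.r α l / Real.exp (-1 / Real.sqrt α)) =ᶠ[𝓝[>] (0:ℝ)]
      scaledResidual l := by
  filter_upwards [Ioo_mem_nhdsGT G.hα₀] with α hα
  exact sqrt_mul_r_div_eq hr hα hl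

lemma sqrt_mul_abs_r_div_eventuallyEq {l : ℝ} (hl : 0 < l) :
    (fun α => Real.sqrt l * |G.r α l| / Real.exp (-1 / Real.sqrt α)) =ᶠ[𝓝[>] (0:ℝ)]
      scaledResidual l := by
  filter_upwards [Ioo_mem_nhdsGT G.hα₀] with α hα
  rw [abs_of_pos (r_pos hr hα hl), sqrt_mul_r_div_eq hr hα hl]

lemma sLow_eq_sqrt {l : ℝ} (hl : 0 < l) :
    G.sLow (fun a => Real.exp (-1 / Real.sqrt a)) l = ENNReal.ofReal (Real.sqrt l) := by
  have hsl := Real.sqrt_pos.2 hl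
  have hquot : (fun α => ENNReal.ofReal (Real.exp (-1 / Real.sqrt α)) / ENNReal.ofReal |G.r α l|)
      =ᶠ[𝓝[>] (0:ℝ)] fun α => ENNReal.ofReal (Real.sqrt l / scaledResidual l α) := by
    filter_upwards [Ioo_mem_nhdsGT G.hα₀] with α hα
    have hR := sqrt_mul_r_div_eq hr hα hl
    have hr0 := r_pos hr hα hl
    rw [← ENNReal.ofReal_div_of_pos (abs_pos.2 hr0.ne'), abs_of_pos hr0, ← hR]
    have := Real.exp_pos (-1 / Real.sqrt α)
    congr 1
    field_simp
  rw [SRM.sLow, liminf_congr hquot]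
  apply le_antisymm
  · refine liminf_le_of_frequently_le' ((frequently_one_le_scaledResidual hl).mono
      fun α hα => ?_)
    exact ENNReal.ofReal_le_ofReal (div_le_self hsl.le hα)
  · have henv : Tendsto (fun α => ENNReal.ofReal
        (Real.sqrt l / (Real.sqrt l * Real.exp (1 / Real.sqrt α - l / α) + 1)))
        (𝓝[>] (0:ℝ)) (𝓝 (ENNReal.ofReal (Real.sqrt l))) := by
      simpa only [Pi.div_apply, div_one] using ENNReal.tendsto_ofReal
        (tendsto_const_nhds.div (tendsto_scaledResidual_envelope hl) one_ne_zero)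
    rw [← henv.liminf_eq]
    exact liminf_le_liminf (.of_forall fun α => ENNReal.ofReal_le_ofReal <|
      div_le_div_of_nonneg_left hsl.le (scaledResidual_pos hl α) (scaledResidual_le l α))

lemma strongPair_sqrt : strongPair G Real.sqrt (fun a => Real.exp (-1 / Real.sqrt a)) := by
  refine ⟨fun l hl => ⟨2, ?_⟩, fun l hl => ?_⟩
  · filter_upwards [sqrt_mul_abs_r_div_eventuallyEq hr hl, eventually_scaledResidual_le_two hl]
      with α hα hle
    rwa [hα]
  · rw [limsup_congr (sqrt_mul_abs_r_div_eventuallyEq hr hl)]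
    exact one_pos.trans_le <| le_limsup_of_frequently_le (frequently_one_le_scaledResidual hl)
      (isBoundedUnder_of_eventually_le (eventually_scaledResidual_le_two hl))

lemma not_optQual : ¬ optQual G (fun a => Real.exp (-1 / Real.sqrt a)) := by
  rintro ⟨s, hs, -, hpair⟩
  refine not_orderSourcePair_of_frequently_lt one_pos (fun γ hγ => ?_) hpair
  have hs1 : 0 < s 1 := hs.2.2.2 1 one_pos
  refine ((frequently_scaledResidual_lt one_pos (div_pos hγ hs1)).and_eventually
    (sqrt_mul_abs_r_div_eventuallyEq hr one_pos)).mono ?_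
  rintro α ⟨hlt, heq⟩
  simp only [Real.sqrt_one, one_mul] at heq
  rwa [mul_div_assoc, heq, ← lt_div_iff₀' hs1]

end SRM

/-- Example 9: with `r_α(λ) = e^{-λ/α} + e^{-1/√α} λ^{-1/2}|sin(λ^{3/2}/α)|` and
`ρ(α)=e^{-1/√α}`, one has `s_ρ(λ)=λ^{1/2}` (so `ρ` is strong qualification), but
`liminf_{α→0⁺} λ^{1/2} r_α(λ)/ρ(α) = liminf (λ^{1/2} e^{1/√α - λ/α} + |sin(λ^{3/2}/α)|) = 0`,
so `ρ` is not optimal qualification. -/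
theorem example9_strong_not_optimal (G : SRM)
    (hr : ∀ α ∈ Ioo (0:ℝ) G.α₀, ∀ l : ℝ, 0 < l →
      G.r α l = Real.exp (-l/α)
        + Real.exp (-1 / Real.sqrt α) * l ^ (-(1:ℝ)/2) * |Real.sin (l ^ ((3:ℝ)/2) / α)|) :
    (∀ l : ℝ, 0 < l →
      G.sLow (fun a => Real.exp (-1 / Real.sqrt a)) l = ENNReal.ofReal (Real.sqrt l)) ∧
    strongQual G (fun a => Real.exp (-1 / Real.sqrt a)) ∧
    (∀ l : ℝ, 0 < l →
      Filter.liminf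
        (fun α => Real.sqrt l * G.r α l / Real.exp (-1 / Real.sqrt α)) (𝓝[>] (0:ℝ)) = 0 ∧
      Filter.liminf
        (fun α => Real.sqrt l * Real.exp (1 / Real.sqrt α - l/α)
          + |Real.sin (l ^ ((3:ℝ)/2) / α)|) (𝓝[>] (0:ℝ)) = 0) ∧
    ¬ optQual G (fun a => Real.exp (-1 / Real.sqrt a)) := by
  have hr' : ∀ α ∈ Ioo (0:ℝ) G.α₀, ∀ l : ℝ, 0 < l →
      G.r α l = Real.exp (-1 / Real.sqrt α) * scaledResidual l α / Real.sqrt l :=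
    fun α hα l hl => (hr α hα l hl).trans (exp_add_rpow_mul_abs_sin_eq hl α)
  refine ⟨fun l hl => SRM.sLow_eq_sqrt hr' hl, ⟨Real.sqrt, memS_sqrt_s16, SRM.strongPair_sqrt hr'⟩,
    fun l hl => ⟨?_, liminf_scaledResidual hl⟩, SRM.not_optQual hr'⟩
  rw [liminf_congr (SRM.sqrt_mul_r_div_eventuallyEq hr' hl)]
  exact liminf_scaledResidual hl
end

section
/- Let {g_α} be a SRM, T:X→Y bounded linear, R_α = g_α(T*T)T*, y ∈ D(T†), x† = T†y. If (ρ,s) is an order-source pair for {g_α} and ‖R_α y - x†‖ = O(ρ(α)) as α→0⁺, then x† ∈ R(s(T*T)). -/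
open Filter Topology Set

/-!
Write `A = T*T`, so that the normal equation turns the residual into
`R_α y - x† = -r_α(A) x†`. Let `χ_α` be a continuous cutoff vanishing on `[0, h(α)]` and put
`w_α = (λ g_α(λ) χ_α(λ) / s(λ))(A) x†`. On the support of `χ_α` the order-source inequality
gives `s |r_α| ≥ γ ρ(α)`, so `‖w_α‖ ≤ C ‖r_α(A) x†‖ / (γ ρ(α)) = O(1)`, while
`s(A) w_α = χ_α(A) x† - (r_α χ_α)(A) x† → x†`, because `x† ∈ (ker T)ᗮ` is a limit of
elements of `range A` and `χ_α → 1` pointwise on `(0, ∞)` with `|(1 - χ_α(λ)) λ| ≤ 2 h(α)`.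
Finally, the limit of the images of a bounded family under a bounded operator lies in its
range: testing against `z` bounds `|⟪x, z⟫|` by `K ‖B* z‖`, and the Riesz representation of
`B* z ↦ ⟪x, z⟫` yields a preimage.
-/

open ContinuousLinearMap
open scoped InnerProductSpace

noncomputable def cutoff (η l : ℝ) : ℝ := max 0 (min 1 (l / η - 1))

@[fun_prop]
lemma continuous_cutoff (η : ℝ) : Continuous (cutoff η) := by
  unfold cutoff; fun_prop

lemma cutoff_nonneg (η l : ℝ) : 0 ≤ cutoff η l := le_max_left _ _

lemma cutoff_le_one (η l : ℝ) : cutoff η l ≤ 1 := max_le zero_le_one (min_le_left _ _)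

lemma cutoff_eq_zero_of_le {η l : ℝ} (hη : 0 < η) (hl : l ≤ η) : cutoff η l = 0 := by
  have : l / η ≤ 1 := div_le_one_of_le₀ hl hη.le
  exact max_eq_left ((min_le_right _ _).trans (by linarith))

lemma cutoff_eq_one_of_le {η l : ℝ} (hη : 0 < η) (hl : 2 * η ≤ l) : cutoff η l = 1 := by
  have : 2 ≤ l / η := (le_div_iff₀ hη).mpr (by linarith)
  rw [cutoff, min_eq_left (by linarith), max_eq_right zero_le_one]

lemma abs_cutoff_sub_one_mul_le {η l : ℝ} (hη : 0 < η) (hl : 0 ≤ l) :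
    |(cutoff η l - 1) * l| ≤ 2 * η := by
  rcases le_or_gt l (2 * η) with hl' | hl'
  · rw [abs_mul, abs_of_nonneg hl, abs_of_nonpos (by linarith [cutoff_le_one η l])]
    nlinarith [cutoff_nonneg η l]
  · simp [cutoff_eq_one_of_le hη hl'.le, hη.le]

lemma continuous_cutoff_div {s : ℝ → ℝ} (hs : ContinuousOn s (Ioi 0))
    (hs₀ : ∀ l, 0 < l → s l ≠ 0) {η : ℝ} (hη : 0 < η) :
    Continuous fun l => cutoff η l / s l := by
  refine continuous_iff_continuousAt.mpr fun l => ?_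
  rcases lt_or_ge l η with hl | hl
  · refine (continuousAt_const (y := (0 : ℝ))).congr
      (eventually_of_mem (Iio_mem_nhds hl) fun m hm => ?_)
    simp [cutoff_eq_zero_of_le hη hm.le]
  · have hl₀ : 0 < l := hη.trans_le hl
    exact (continuous_cutoff η).continuousAt.div (hs.continuousAt (Ioi_mem_nhds hl₀))
      (hs₀ l hl₀)

section FunctionalCalculus

variable {X : Type*} [NormedAddCommGroup X] [InnerProductSpace ℂ X] [CompleteSpace X]
  {A : X →L[ℂ] X}

lemma norm_cfc_apply_sq {f : ℝ → ℝ} (hf : ContinuousOn f (spectrum ℝ A)) (x : X) :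
    ‖cfc f A x‖ ^ 2 = RCLike.re ⟪cfc (fun l => f l * f l) A x, x⟫_ℂ := by
  rw [cfc_mul f f A, mul_apply_eq_comp, ← adjoint_inner_right,
    (cfc_predicate f A : IsSelfAdjoint _).adjoint_eq, inner_self_eq_norm_sq]

lemma norm_cfc_apply_le_of_abs_le {f g : ℝ → ℝ} (hf : ContinuousOn f (spectrum ℝ A))
    (hg : ContinuousOn g (spectrum ℝ A)) (hfg : ∀ l ∈ spectrum ℝ A, |f l| ≤ |g l|) (x : X) :
    ‖cfc f A x‖ ≤ ‖cfc g A x‖ := by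
  have hpos : (cfc (fun l => g l * g l) A - cfc (fun l => f l * f l) A).IsPositive := by
    rw [← nonneg_iff_isPositive, ← cfc_sub _ _ A]
    exact cfc_nonneg fun l hl => sub_nonneg.mpr <| by
      simpa only [abs_mul_abs_self] using mul_self_le_mul_self (abs_nonneg _) (hfg l hl)
  have := hpos.re_inner_nonneg_left x
  rw [sub_apply, inner_sub_left, map_sub, ← norm_cfc_apply_sq hf, ← norm_cfc_apply_sq hg,
    sub_nonneg] at this
  exact pow_le_pow_iff_left₀ (norm_nonneg _) (norm_nonneg _) two_ne_zero |>.mp this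

lemma cfc_mul_id_apply (hA : IsSelfAdjoint A) {f : ℝ → ℝ}
    (hf : ContinuousOn f (spectrum ℝ A)) (x : X) :
    cfc (fun l => f l * l) A x = cfc f A (A x) := by
  rw [cfc_mul f (fun l => l) A, cfc_id' ℝ A, mul_apply_eq_comp]

lemma tendsto_cfc_cutoff_apply (hA : 0 ≤ A) {x : X} (hx : x ∈ closure (range A)) :
    Tendsto (fun η => cfc (cutoff η) A x) (𝓝[>] 0) (𝓝 x) := by
  have hbound : ∃ C, ∀ η, ‖cfc (cutoff η) A‖ ≤ C :=
    ⟨1, fun η => norm_cfc_le zero_le_one fun l _ => by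
      rw [Real.norm_eq_abs, abs_of_nonneg (cutoff_nonneg η l)]
      exact cutoff_le_one η l⟩
  have hequi : Equicontinuous fun η => ⇑(cfc (cutoff η) A) :=
    ((NormedSpace.equicontinuous_TFAE fun η => cfc (cutoff η) A).out 5 1).mp hbound
  refine (hequi x).tendsto_of_mem_closure (f := id) (tendsto_id'.2 nhdsWithin_le_nhds) ?_ hx
  rintro _ ⟨v, rfl⟩
  have hA' : IsSelfAdjoint A := IsSelfAdjoint.of_nonneg hA
  rw [tendsto_iff_norm_sub_tendsto_zero]
  have hlim : Tendsto (fun η : ℝ => 2 * η * ‖v‖) (𝓝[>] 0) (𝓝 0) := by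
    refine tendsto_nhdsWithin_of_tendsto_nhds ?_
    simpa using ((continuous_id.const_mul 2).mul_const ‖v‖).tendsto 0
  refine squeeze_zero' (Eventually.of_forall fun _ => norm_nonneg _) ?_ hlim
  filter_upwards [self_mem_nhdsWithin] with η (hη : 0 < η)
  calc ‖cfc (cutoff η) A (A v) - id (A v)‖ = ‖cfc (fun l => (cutoff η l - 1) * l) A v‖ := by
        rw [cfc_mul_id_apply hA' (by fun_prop), cfc_sub (cutoff η) (fun _ => 1) A,
          cfc_const_one ℝ A, sub_apply, one_apply_eq_self, id]
    _ ≤ ‖cfc (fun l => (cutoff η l - 1) * l) A‖ * ‖v‖ := le_opNorm _ _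
    _ ≤ 2 * η * ‖v‖ := by
        gcongr
        exact norm_cfc_le (by positivity) fun l hl =>
          abs_cutoff_sub_one_mul_le hη (spectrum_nonneg_of_nonneg hA hl)

lemma norm_cfc_mul_cutoff_apply_le {f : ℝ → ℝ} (hf : Continuous f) (η : ℝ) (x : X) :
    ‖cfc (fun l => f l * cutoff η l) A x‖ ≤ ‖cfc f A x‖ := by
  refine norm_cfc_apply_le_of_abs_le (by fun_prop) hf.continuousOn (fun l _ => ?_) x
  rw [abs_mul, abs_of_nonneg (cutoff_nonneg η l)]
  exact mul_le_of_le_one_right (abs_nonneg _) (cutoff_le_one η l)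

end FunctionalCalculus

section Adjoint

variable {𝕜 X Y : Type*} [RCLike 𝕜] [NormedAddCommGroup X] [InnerProductSpace 𝕜 X]
  [CompleteSpace X] [NormedAddCommGroup Y] [InnerProductSpace 𝕜 Y] [CompleteSpace Y]

theorem ContinuousLinearMap.exists_adjoint_apply_eq_of_norm_inner_le (B : X →L[𝕜] Y) {x : X}
    {K : ℝ} (h : ∀ z, ‖⟪x, z⟫_𝕜‖ ≤ K * ‖B z‖) : ∃ u, adjoint B u = x := by
  let B' : X →ₗ[𝕜] Y := B
  have hker : LinearMap.ker B' ≤ LinearMap.ker (innerₛₗ 𝕜 x) := fun z hz => by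
    simpa [show B z = 0 from hz] using h z
  -- `φ (B z) = ⟪x, z⟫` is well defined on `range B` because `ker B ⊆ ker ⟪x, ·⟫`
  let φ : LinearMap.range B' →ₗ[𝕜] 𝕜 :=
    (LinearMap.ker B').liftQ _ hker ∘ₗ B'.quotKerEquivRange.symm.toLinearMap
  have hφ : ∀ z, φ ⟨B' z, B'.mem_range_self z⟩ = ⟪x, z⟫_𝕜 := fun z => by
    simp [φ, LinearMap.quotKerEquivRange_symm_apply_image]
  have hφK : ∀ v, ‖φ v‖ ≤ max K 0 * ‖v‖ := by
    rintro ⟨-, z, rfl⟩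
    rw [hφ]
    exact (h z).trans (mul_le_mul_of_nonneg_right (le_max_left _ _) (norm_nonneg _))
  obtain ⟨F, hF, -⟩ := exists_extension_norm_eq _ (φ.mkContinuous _ hφK)
  refine ⟨(InnerProductSpace.toDual 𝕜 Y).symm F, ext_inner_right 𝕜 fun z => ?_⟩
  rw [adjoint_inner_left, InnerProductSpace.toDual_symm_apply, ← hφ z]
  exact hF ⟨B' z, B'.mem_range_self z⟩

theorem ContinuousLinearMap.exists_apply_eq_of_tendsto {ι : Type*} {l : Filter ι} [l.NeBot]
    (B : X →L[𝕜] Y) {w : ι → X} {x : Y} {K : ℝ} (hw : ∀ᶠ i in l, ‖w i‖ ≤ K)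
    (hx : Tendsto (fun i => B (w i)) l (𝓝 x)) : ∃ u, B u = x := by
  suffices ∀ z, ‖⟪x, z⟫_𝕜‖ ≤ K * ‖adjoint B z‖ by
    simpa using (adjoint B).exists_adjoint_apply_eq_of_norm_inner_le this
  intro z
  refine le_of_tendsto (hx.inner tendsto_const_nhds).norm ?_
  filter_upwards [hw] with i hi
  calc ‖⟪B (w i), z⟫_𝕜‖ = ‖⟪w i, adjoint B z⟫_𝕜‖ := by rw [adjoint_inner_right]
    _ ≤ ‖w i‖ * ‖adjoint B z‖ := norm_inner_le_norm _ _
    _ ≤ K * ‖adjoint B z‖ := by gcongr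

theorem ContinuousLinearMap.mem_closure_range_adjoint_comp_self {T : X →L[𝕜] Y} {x : X}
    (hx : x ∈ (LinearMap.ker (T : X →ₗ[𝕜] Y))ᗮ) : x ∈ closure (range (adjoint T ∘L T)) := by
  have hsa : adjoint (adjoint T ∘L T) = adjoint T ∘L T := by
    rw [adjoint_comp, adjoint_adjoint]
  rw [← ker_adjoint_comp_self, orthogonal_ker, hsa] at hx
  rwa [← SetLike.mem_coe, Submodule.topologicalClosure_coe, LinearMap.coe_range] at hx

end Adjoint

namespace SRM

variable (G : SRM)

lemma continuous_r {α : ℝ} (hg : Continuous (G.g α)) : Continuous (G.r α) :=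
  continuous_const.sub (continuous_id.mul hg)

noncomputable def sourceApprox (s : ℝ → ℝ) (α η l : ℝ) : ℝ := l * G.g α l * (cutoff η l / s l)

lemma continuous_sourceApprox {s : ℝ → ℝ} (hs : memS s) {α η : ℝ} (hg : Continuous (G.g α))
    (hη : 0 < η) : Continuous (G.sourceApprox s α η) :=
  (continuous_id.mul hg).mul (continuous_cutoff_div (hs.1.mono Ioi_subset_Ici_self)
    (fun l hl => (hs.2.2.2 l hl).ne') hη)

lemma mul_sourceApprox {s : ℝ → ℝ} (hs : ∀ l, 0 < l → s l ≠ 0) {α η : ℝ} (hη : 0 < η)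
    (l : ℝ) : s l * G.sourceApprox s α η l = cutoff η l - G.r α l * cutoff η l := by
  rw [sourceApprox, SRM.r]
  rcases le_or_gt l η with hl | hl
  · simp [cutoff_eq_zero_of_le hη hl]
  · field_simp [hs l (hη.trans hl)]
    ring

lemma abs_sourceApprox_le {s : ℝ → ℝ} (hs : ∀ l, 0 < l → 0 < s l) {α η γ ρα : ℝ}
    (hα : α ∈ Ioo 0 G.α₀) (hη : 0 < η) (hγ : 0 < γ) (hρα : 0 < ρα)
    (hγle : ∀ l, η ≤ l → γ ≤ s l * |G.r α l| / ρα) {l : ℝ} (hl : 0 ≤ l) :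
    |G.sourceApprox s α η l| ≤ G.C / (γ * ρα) * |G.r α l| := by
  rcases le_or_gt l η with hlη | hlη
  · simp only [sourceApprox, cutoff_eq_zero_of_le hη hlη, zero_div, mul_zero, abs_zero]
    exact mul_nonneg (div_nonneg G.hC.le (by positivity)) (abs_nonneg _)
  have hsl := hs l (hη.trans hlη)
  have hsr : γ * ρα ≤ s l * |G.r α l| := (le_div_iff₀ hρα).mp (hγle l hlη.le)
  calc |G.sourceApprox s α η l| = |l * G.g α l| * (cutoff η l / s l) := by
        rw [sourceApprox, abs_mul, abs_of_nonneg (div_nonneg (cutoff_nonneg η l) hsl.le)]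
    _ ≤ G.C * (1 / s l) :=
        mul_le_mul (G.bound α hα l hl) (div_le_div_of_nonneg_right (cutoff_le_one η l) hsl.le)
          (div_nonneg (cutoff_nonneg η l) hsl.le) G.hC.le
    _ ≤ G.C * (|G.r α l| / (γ * ρα)) := by
        refine mul_le_mul_of_nonneg_left ?_ G.hC.le
        rw [div_le_div_iff₀ hsl (by positivity)]
        linarith
    _ = G.C / (γ * ρα) * |G.r α l| := by ring

section Operator

variable {X : Type*} [NormedAddCommGroup X] [InnerProductSpace ℂ X] [CompleteSpace X]
  {A : X →L[ℂ] X}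

lemma cfc_r_apply (hA : IsSelfAdjoint A) {α : ℝ} (hg : Continuous (G.g α)) (x : X) :
    cfc (G.r α) A x = x - cfc (G.g α) A (A x) := by
  have : G.r α = fun l => 1 - G.g α l * l := funext fun l => by rw [SRM.r, mul_comm]
  rw [this, cfc_sub (fun _ => 1) (fun l => G.g α l * l) A, sub_apply, cfc_const_one ℝ A,
    one_apply_eq_self, cfc_mul_id_apply hA hg.continuousOn]

lemma norm_cfc_sourceApprox_apply_le (hA : 0 ≤ A) {s : ℝ → ℝ} (hs : memS s) {α η γ ρα : ℝ}
    (hα : α ∈ Ioo 0 G.α₀) (hg : Continuous (G.g α)) (hη : 0 < η) (hγ : 0 < γ) (hρα : 0 < ρα)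
    (hγle : ∀ l, η ≤ l → γ ≤ s l * |G.r α l| / ρα) (x : X) :
    ‖cfc (G.sourceApprox s α η) A x‖ ≤ G.C / (γ * ρα) * ‖cfc (G.r α) A x‖ := by
  have hk : 0 ≤ G.C / (γ * ρα) := div_nonneg G.hC.le (by positivity)
  have hr := G.continuous_r hg
  calc ‖cfc (G.sourceApprox s α η) A x‖ ≤ ‖cfc (fun l => G.C / (γ * ρα) * G.r α l) A x‖ := by
        refine norm_cfc_apply_le_of_abs_le (G.continuous_sourceApprox hs hg hη).continuousOn
          (by fun_prop) (fun l hl => ?_) x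
        rw [abs_mul, abs_of_nonneg hk]
        exact G.abs_sourceApprox_le hs.2.2.2 hα hη hγ hρα hγle (spectrum_nonneg_of_nonneg hA hl)
    _ = G.C / (γ * ρα) * ‖cfc (G.r α) A x‖ := by
        rw [cfc_const_mul _ _ A, smul_apply, norm_smul, Real.norm_of_nonneg hk]

lemma cfc_apply_cfc_sourceApprox_apply (hA : 0 ≤ A) {s : ℝ → ℝ} (hs : memS s) {α η : ℝ}
    (hg : Continuous (G.g α)) (hη : 0 < η) (x : X) :
    cfc s A (cfc (G.sourceApprox s α η) A x)
      = cfc (cutoff η) A x - cfc (fun l => G.r α l * cutoff η l) A x := by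
  have hr := G.continuous_r hg
  have hs' : ContinuousOn s (spectrum ℝ A) :=
    hs.1.mono fun l hl => spectrum_nonneg_of_nonneg hA hl
  rw [← sub_apply, ← cfc_sub _ _ A, ← mul_apply_eq_comp,
    ← cfc_mul s _ A hs' (G.continuous_sourceApprox hs hg hη).continuousOn]
  exact congrArg (fun f => cfc f A x)
    (funext (G.mul_sourceApprox (fun l hl => (hs.2.2.2 l hl).ne') hη))

theorem exists_cfc_eq_of_norm_cfc_r_le (hcont : ∀ α ∈ Ioo (0:ℝ) G.α₀, Continuous (G.g α))
    (hA : 0 ≤ A) {x : X} (hx : x ∈ closure (range A)) {s ρ : ℝ → ℝ} (hs : memS s)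
    (hρ : memO ρ) (hos : orderSourcePair G ρ s) {c : ℝ}
    (hres : ∀ᶠ α in 𝓝[>] (0:ℝ), ‖cfc (G.r α) A x‖ ≤ c * ρ α) :
    ∃ w, cfc s A w = x := by
  obtain ⟨γ, hγ, η, hη, hη₀, hγle⟩ := hos
  have hIoo : ∀ᶠ α in 𝓝[>] (0:ℝ), α ∈ Ioo 0 G.α₀ := Ioo_mem_nhdsGT G.hα₀
  refine (cfc s A).exists_apply_eq_of_tendsto (l := 𝓝[>] 0)
    (w := fun α => cfc (G.sourceApprox s α (η α)) A x) (K := G.C * c / γ) ?_ ?_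
  · filter_upwards [hres, hIoo] with α hres hα
    have hρα : 0 < ρ α := hρ.1 α hα.1
    calc ‖cfc (G.sourceApprox s α (η α)) A x‖ ≤ G.C / (γ * ρ α) * ‖cfc (G.r α) A x‖ :=
          G.norm_cfc_sourceApprox_apply_le hA hs hα (hcont α hα) (hη α hα) hγ hρα (hγle α hα) x
      _ ≤ G.C / (γ * ρ α) * (c * ρ α) := by
          gcongr
          exact div_nonneg G.hC.le (by positivity)
      _ = G.C * c / γ := by field_simp
  · have hcut : Tendsto (fun α => cfc (cutoff (η α)) A x) (𝓝[>] 0) (𝓝 x) :=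
      (tendsto_cfc_cutoff_apply hA hx).comp (tendsto_nhdsWithin_iff.mpr ⟨hη₀, hIoo.mono hη⟩)
    have hsmall : Tendsto (fun α => cfc (fun l => G.r α l * cutoff (η α) l) A x) (𝓝[>] 0)
        (𝓝 0) := by
      refine squeeze_zero_norm' ?_ (by simpa using hρ.2.2.const_mul c)
      filter_upwards [hres, hIoo] with α hres hα
      exact (norm_cfc_mul_cutoff_apply_le (G.continuous_r (hcont α hα)) _ x).trans hres
    refine (sub_zero x ▸ hcut.sub hsmall).congr' ?_
    filter_upwards [hIoo] with α hα
    exact (G.cfc_apply_cfc_sourceApprox_apply hA hs (hcont α hα) (hη α hα) x).symm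

end Operator

end SRM

section Operators

variable {X Y : Type*} [NormedAddCommGroup X] [InnerProductSpace ℂ X] [CompleteSpace X]
  [NormedAddCommGroup Y] [InnerProductSpace ℂ Y] [CompleteSpace Y]
/-- `x† = T†y` is encoded by the normal equation `T*T x† = T*y` together with `x† ⊥ ker T`,
and `R_α y = g_α(T*T) T*y` is formed with the continuous functional calculus. -/
theorem converse_source (G : SRM)
    (hcont : ∀ α ∈ Ioo (0:ℝ) G.α₀, Continuous (G.g α))
    (T : X →L[ℂ] Y) (y : Y) (xdag : X)
    (hnormal : ((ContinuousLinearMap.adjoint T).comp T) xdag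
      = ContinuousLinearMap.adjoint T y)
    (hker : xdag ∈ (LinearMap.ker (T : X →ₗ[ℂ] Y))ᗮ)
    (s ρ : ℝ → ℝ) (hs : memS s) (hρ : memO ρ)
    (hos : orderSourcePair G ρ s)
    (hrate : ∃ c > (0:ℝ), ∀ᶠ α in 𝓝[>] (0:ℝ),
      ‖cfc (G.g α) ((ContinuousLinearMap.adjoint T).comp T)
          (ContinuousLinearMap.adjoint T y) - xdag‖ ≤ c * ρ α) :
    ∃ w : X, cfc s ((ContinuousLinearMap.adjoint T).comp T) w = xdag := by
  obtain ⟨c, -, hrate⟩ := hrate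
  have hA : 0 ≤ adjoint T ∘L T := (nonneg_iff_isPositive _).mpr T.isPositive_adjoint_comp_self
  refine G.exists_cfc_eq_of_norm_cfc_r_le hcont hA (mem_closure_range_adjoint_comp_self hker)
    hs hρ hos (c := c) ?_
  filter_upwards [hrate, Ioo_mem_nhdsGT G.hα₀] with α hα hα'
  rwa [G.cfc_r_apply (IsSelfAdjoint.of_nonneg hA) (hcont α hα'), hnormal, norm_sub_rev]

end Operators
end
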